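/- arXiv:2012.08627 — 9 statements merged into one kernel-verified Lean document; each statement's English description precedes it below -/
import Mathlib

section
/- Let g be the 5-dimensional Lie algebra candidate on basis {A,B,C,X,Y} with [A,B]=2C, [C,A]=2B, [B,C]=2A, [A,X]=−b₁₁B−c₁₁C, [A,Y]=−b₂₁B−c₂₁C, [B,X]=b₁₁A−c₁₂C, [B,Y]=b₂₁A−c₂₂C, [C,X]=c₁₁A+c₁₂B, [C,Y]=c₂₁A+c₂₂B, [X,Y]=ρX+θ₁A+θ₂B+θ₃C. Then the Jacobi identity holds (so g is a Lie algebra) if and only if θ₁ = ½(−ρc₁₂ + b₁₁c₂₁ − b₂₁c₁₁), θ₂ = ½(ρc₁₁ + b₁₁c₂₂ − b₂₁c₁₂), θ₃ = ½(−ρb₁₁ + c₁₁c₂₂ − c₂₁c₁₂). -/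
set_option maxHeartbeats 4000000

private lemma half_trick {V : Type*} [AddCommGroup V] [Module ℝ V] {a : V}
    (h : a = -a) : a = 0 := by
  have h2 : (2:ℝ) • a = 0 := by
    rw [two_smul]; nth_rewrite 2 [h]; simp
  calc a = (1/2:ℝ) • ((2:ℝ) • a) := by rw [smul_smul]; norm_num
    _ = 0 := by rw [h2, smul_zero]

/-- Proposition, SU(2) case: the bracket defined by the given
relations on the basis `{A,B,C,X,Y}` satisfies the Jacobi identity (i.e. defines
a Lie algebra) iff
`θ₁ = ½(−ρc₁₂ + b₁₁c₂₁ − b₂₁c₁₁)`, `θ₂ = ½(ρc₁₁ + b₁₁c₂₂ − b₂₁c₁₂)`,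
`θ₃ = ½(−ρb₁₁ + c₁₁c₂₂ − c₂₁c₁₂)`. -/
theorem stmt_4 {V : Type*} [AddCommGroup V] [Module ℝ V]
    (br : V →ₗ[ℝ] V →ₗ[ℝ] V)
    (A B C X Y : V)
    (b11 b21 c11 c12 c21 c22 ρ θ1 θ2 θ3 : ℝ)
    (hLI : LinearIndependent ℝ ![A, B, C, X, Y])
    (hspan : Submodule.span ℝ {A, B, C, X, Y} = ⊤)
    (hskew : ∀ u v : V, br u v = - br v u)
    (hAB : br A B = (2:ℝ) • C) (hCA : br C A = (2:ℝ) • B) (hBC : br B C = (2:ℝ) • A)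
    (hAX : br A X = -(b11 • B) - c11 • C) (hAY : br A Y = -(b21 • B) - c21 • C)
    (hBX : br B X = b11 • A - c12 • C) (hBY : br B Y = b21 • A - c22 • C)
    (hCX : br C X = c11 • A + c12 • B) (hCY : br C Y = c21 • A + c22 • B)
    (hXY : br X Y = ρ • X + θ1 • A + θ2 • B + θ3 • C) :
    (∀ u v w : V, br (br u v) w + br (br v w) u + br (br w u) v = 0) ↔
      (θ1 = (1/2) * (-ρ * c12 + b11 * c21 - b21 * c11) ∧
       θ2 = (1/2) * (ρ * c11 + b11 * c22 - b21 * c12) ∧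
       θ3 = (1/2) * (-ρ * b11 + c11 * c22 - c21 * c12)) := by
  have hAA : br A A = 0 := half_trick (hskew A A)
  have hBB : br B B = 0 := half_trick (hskew B B)
  have hCC : br C C = 0 := half_trick (hskew C C)
  have hXX : br X X = 0 := half_trick (hskew X X)
  have hYY : br Y Y = 0 := half_trick (hskew Y Y)
  have hBA : br B A = -((2:ℝ) • C) := by rw [hskew, hAB]
  have hAC : br A C = -((2:ℝ) • B) := by rw [hskew, hCA]
  have hCB : br C B = -((2:ℝ) • A) := by rw [hskew, hBC]
  have hXA : br X A = -(-(b11 • B) - c11 • C) := by rw [hskew, hAX]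
  have hYA : br Y A = -(-(b21 • B) - c21 • C) := by rw [hskew, hAY]
  have hXB : br X B = -(b11 • A - c12 • C) := by rw [hskew, hBX]
  have hYB : br Y B = -(b21 • A - c22 • C) := by rw [hskew, hBY]
  have hXC : br X C = -(c11 • A + c12 • B) := by rw [hskew, hCX]
  have hYC : br Y C = -(c21 • A + c22 • B) := by rw [hskew, hCY]
  have hYX : br Y X = -(ρ • X + θ1 • A + θ2 • B + θ3 • C) := by rw [hskew, hXY]
  constructor
  · intro hJ
    have key : ∀ g0 g1 g2 g3 g4 : ℝ,
        (g0 • A + g1 • B + g2 • C + g3 • X + g4 • Y = 0) →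
        g0 = 0 ∧ g1 = 0 ∧ g2 = 0 ∧ g3 = 0 ∧ g4 = 0 := by
      intro g0 g1 g2 g3 g4 hg
      have h := Fintype.linearIndependent_iff.mp hLI ![g0, g1, g2, g3, g4]
        (by simpa [Fin.sum_univ_five] using hg)
      exact ⟨by simpa using h 0, by simpa using h 1, by simpa using h 2,
        by simpa using h 3, by simpa using h 4⟩
    have h1 := hJ A X Y
    have h2 := hJ B X Y
    simp only [hAA, hBB, hCC, hXX, hYY, hAB, hBA, hAC, hCA, hBC, hCB, hAX, hXA,
      hAY, hYA, hBX, hXB, hBY, hYB, hCX, hXC, hCY, hYC, hXY, hYX,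
      map_add, map_sub, map_neg, map_smul, map_zero,
      LinearMap.add_apply, LinearMap.sub_apply, LinearMap.neg_apply,
      LinearMap.smul_apply, LinearMap.zero_apply] at h1 h2
    obtain ⟨-, q1, q2, -, -⟩ := key 0 (ρ*b11 + 2*θ3 - c11*c22 + c12*c21)
      (ρ*c11 - 2*θ2 + b11*c22 - b21*c12) 0 0
      (by linear_combination (norm := module) h1)
    obtain ⟨-, -, q3, -, -⟩ := key (c11*c22 - c12*c21 - ρ*b11 - 2*θ3) 0
      (ρ*c12 + 2*θ1 + b21*c11 - b11*c21) 0 0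
      (by linear_combination (norm := module) h2)
    refine ⟨by linarith, by linarith, by linarith⟩
  · rintro ⟨rfl, rfl, rfl⟩
    have base : ∀ u ∈ ({A, B, C, X, Y} : Set V), ∀ v ∈ ({A, B, C, X, Y} : Set V),
        ∀ w ∈ ({A, B, C, X, Y} : Set V),
        br (br u v) w + br (br v w) u + br (br w u) v = 0 := by
      intro u hu v hv w hw
      simp only [Set.mem_insert_iff, Set.mem_singleton_iff] at hu hv hw
      rcases hu with rfl | rfl | rfl | rfl | rfl <;>
        rcases hv with rfl | rfl | rfl | rfl | rfl <;>
        rcases hw with rfl | rfl | rfl | rfl | rfl <;>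
        · simp only [hAA, hBB, hCC, hXX, hYY, hAB, hBA, hAC, hCA, hBC, hCB, hAX, hXA,
            hAY, hYA, hBX, hXB, hBY, hYB, hCX, hXC, hCY, hYC, hXY, hYX,
            map_add, map_sub, map_neg, map_smul, map_zero,
            LinearMap.add_apply, LinearMap.sub_apply, LinearMap.neg_apply,
            LinearMap.smul_apply, LinearMap.zero_apply]
          module
    have mem : ∀ z : V, z ∈ Submodule.span ℝ ({A, B, C, X, Y} : Set V) := by
      intro z; rw [hspan]; trivial
    -- linearity lemmas
    have Jadd1 : ∀ u u' v w : V,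
        br (br (u + u') v) w + br (br v w) (u + u') + br (br w (u + u')) v
          = (br (br u v) w + br (br v w) u + br (br w u) v)
            + (br (br u' v) w + br (br v w) u' + br (br w u') v) := by
      intro u u' v w
      simp only [map_add, LinearMap.add_apply]; abel
    have Jsmul1 : ∀ (r : ℝ) (u v w : V),
        br (br (r • u) v) w + br (br v w) (r • u) + br (br w (r • u)) v
          = r • (br (br u v) w + br (br v w) u + br (br w u) v) := by
      intro r u v w
      simp only [map_smul, LinearMap.smul_apply, smul_add]
    have Jadd2 : ∀ u v v' w : V,
        br (br u (v + v')) w + br (br (v + v') w) u + br (br w u) (v + v')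
          = (br (br u v) w + br (br v w) u + br (br w u) v)
            + (br (br u v') w + br (br v' w) u + br (br w u) v') := by
      intro u v v' w
      simp only [map_add, LinearMap.add_apply]; abel
    have Jsmul2 : ∀ (r : ℝ) (u v w : V),
        br (br u (r • v)) w + br (br (r • v) w) u + br (br w u) (r • v)
          = r • (br (br u v) w + br (br v w) u + br (br w u) v) := by
      intro r u v w
      simp only [map_smul, LinearMap.smul_apply, smul_add]
    have Jadd3 : ∀ u v w w' : V,
        br (br u v) (w + w') + br (br v (w + w')) u + br (br (w + w') u) v
          = (br (br u v) w + br (br v w) u + br (br w u) v)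
            + (br (br u v) w' + br (br v w') u + br (br w' u) v) := by
      intro u v w w'
      simp only [map_add, LinearMap.add_apply]; abel
    have Jsmul3 : ∀ (r : ℝ) (u v w : V),
        br (br u v) (r • w) + br (br v (r • w)) u + br (br (r • w) u) v
          = r • (br (br u v) w + br (br v w) u + br (br w u) v) := by
      intro r u v w
      simp only [map_smul, LinearMap.smul_apply, smul_add]
    have step3 : ∀ u ∈ ({A, B, C, X, Y} : Set V), ∀ v ∈ ({A, B, C, X, Y} : Set V),
        ∀ w : V, br (br u v) w + br (br v w) u + br (br w u) v = 0 := by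
      intro u hu v hv w
      refine Submodule.span_induction
        (p := fun w _ => br (br u v) w + br (br v w) u + br (br w u) v = 0)
        (fun x hx => base u hu v hv x hx) ?_ ?_ ?_ (mem w)
      · simp only [map_zero, LinearMap.zero_apply]; abel
      · intro x y _ _ hx hy; rw [Jadd3, hx, hy, add_zero]
      · intro r x _ hx; rw [Jsmul3, hx, smul_zero]
    have step2 : ∀ u ∈ ({A, B, C, X, Y} : Set V),
        ∀ v w : V, br (br u v) w + br (br v w) u + br (br w u) v = 0 := by
      intro u hu v w
      refine Submodule.span_induction
        (p := fun v _ => ∀ w : V, br (br u v) w + br (br v w) u + br (br w u) v = 0)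
        (fun x hx => step3 u hu x hx) ?_ ?_ ?_ (mem v) w
      · intro w; simp only [map_zero, LinearMap.zero_apply]; abel
      · intro x y _ _ hx hy w; rw [Jadd2, hx, hy, add_zero]
      · intro r x _ hx w; rw [Jsmul2, hx, smul_zero]
    intro u v w
    refine Submodule.span_induction
      (p := fun u _ => ∀ v w : V, br (br u v) w + br (br v w) u + br (br w u) v = 0)
      (fun x hx => step2 x hx) ?_ ?_ ?_ (mem u) v w
    · intro v w; simp only [map_zero, LinearMap.zero_apply]; abel
    · intro x y _ _ hx hy v w; rw [Jadd1, hx, hy, add_zero]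
    · intro r x _ hx v w; rw [Jsmul1, hx, smul_zero]
end

section
/- Let g = span{A,B,C,X,Y} be the Lie algebra of Proposition (SU(2) case) equipped with a semi-Riemannian inner product making {A,B,C,X,Y} orthonormal with causal characters ε_A,...,ε_Y ∈ {±1}. Then the vertical second fundamental form satisfies B^V(A,A) = B^V(B,B) = B^V(C,C) = 0; in particular trace B^V = 0, so the foliation generated by su(2) is minimal regardless of the metric signature and the structure constants. -/
/-- for the 5-dimensional semi-Riemannian Lie algebra of the SU(2)
case with orthonormal basis `{A,B,C,X,Y}` of causal characters `ε`, the vertical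
second fundamental form satisfies `B^V(A,A) = B^V(B,B) = B^V(C,C) = 0`; in
particular its trace vanishes, so the foliation generated by `su(2)` is minimal
for any metric signature and any structure constants. -/
theorem stmt_5 {V : Type*} [AddCommGroup V] [Module ℝ V]
    (br : V →ₗ[ℝ] V →ₗ[ℝ] V) (g : V →ₗ[ℝ] V →ₗ[ℝ] ℝ)
    (A B C X Y : V)
    (εA εB εC εX εY b11 b21 c11 c12 c21 c22 ρ θ1 θ2 θ3 : ℝ)
    (hεA : εA = 1 ∨ εA = -1) (hεB : εB = 1 ∨ εB = -1) (hεC : εC = 1 ∨ εC = -1)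
    (hεX : εX = 1 ∨ εX = -1) (hεY : εY = 1 ∨ εY = -1)
    (hgsymm : ∀ u v : V, g u v = g v u)
    (hgAA : g A A = εA) (hgBB : g B B = εB) (hgCC : g C C = εC)
    (hgXX : g X X = εX) (hgYY : g Y Y = εY)
    (hgAB : g A B = 0) (hgAC : g A C = 0) (hgAX : g A X = 0) (hgAY : g A Y = 0)
    (hgBC : g B C = 0) (hgBX : g B X = 0) (hgBY : g B Y = 0)
    (hgCX : g C X = 0) (hgCY : g C Y = 0) (hgXY : g X Y = 0)
    (hskew : ∀ u v : V, br u v = - br v u)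
    (hAB : br A B = (2:ℝ) • C) (hCA : br C A = (2:ℝ) • B) (hBC : br B C = (2:ℝ) • A)
    (hAX : br A X = -(b11 • B) - c11 • C) (hAY : br A Y = -(b21 • B) - c21 • C)
    (hBX : br B X = b11 • A - c12 • C) (hBY : br B Y = b21 • A - c22 • C)
    (hCX : br C X = c11 • A + c12 • B) (hCY : br C Y = c21 • A + c22 • B)
    (hXY : br X Y = ρ • X + θ1 • A + θ2 • B + θ3 • C)
    (BV : V → V → V)
    (hBV : ∀ E F : V, BV E F =
      ((1:ℝ)/2) • ((εX * (g (br X E) F + g (br X F) E)) • X +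
                   (εY * (g (br Y E) F + g (br Y F) E)) • Y)) :
    BV A A = 0 ∧ BV B B = 0 ∧ BV C C = 0 ∧
      εA • BV A A + εB • BV B B + εC • BV C C = 0 := by
  have hXA : br X A = -(br A X) := hskew X A
  have hXB : br X B = -(br B X) := hskew X B
  have hXC : br X C = -(br C X) := hskew X C
  have hYA : br Y A = -(br A Y) := hskew Y A
  have hYB : br Y B = -(br B Y) := hskew Y B
  have hYC : br Y C = -(br C Y) := hskew Y C
  have h1 : BV A A = 0 := by
    rw [hBV, hXA, hYA, hAX, hAY]
    simp [map_neg, map_sub, map_smul, hgAB, hgAC, hgsymm B A, hgsymm C A]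
  have h2 : BV B B = 0 := by
    rw [hBV, hXB, hYB, hBX, hBY]
    simp [map_neg, map_sub, map_smul, hgAB, hgBC, hgsymm A B, hgsymm C B]
  have h3 : BV C C = 0 := by
    rw [hBV, hXC, hYC, hCX, hCY]
    simp [map_neg, map_add, map_smul, hgAC, hgBC, hgsymm A C, hgsymm B C]
  exact ⟨h1, h2, h3, by rw [h1, h2, h3]; simp⟩
end

section
/- In the setting of the five-dimensional Lie algebra with su(2) = span{A,B,C} as above, the second fundamental form of the vertical distribution satisfies 2·B^V(A,B) = ε_X b₁₁(ε_B−ε_A)X + ε_Y b₂₁(ε_B−ε_A)Y, 2·B^V(A,C) = ε_X c₁₁(ε_C−ε_A)X + ε_Y c₂₁(ε_C−ε_A)Y, 2·B^V(B,C) = ε_X c₁₂(ε_C−ε_B)X + ε_Y c₂₂(ε_C−ε_B)Y. Consequently the foliation is totally geodesic if and only if (ε_B−ε_A)b₁₁ = (ε_B−ε_A)b₂₁ = (ε_C−ε_A)c₁₁ = (ε_C−ε_A)c₂₁ = (ε_C−ε_B)c₁₂ = (ε_C−ε_B)c₂₂ = 0. -/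
/-- explicit formulas for the mixed values of the vertical second
fundamental form in the SU(2) case, and the resulting characterization: the
foliation is totally geodesic iff
`(εB−εA)b₁₁ = (εB−εA)b₂₁ = (εC−εA)c₁₁ = (εC−εA)c₂₁ = (εC−εB)c₁₂ = (εC−εB)c₂₂ = 0`. -/
theorem stmt_6 {V : Type*} [AddCommGroup V] [Module ℝ V]
    (br : V →ₗ[ℝ] V →ₗ[ℝ] V) (g : V →ₗ[ℝ] V →ₗ[ℝ] ℝ)
    (A B C X Y : V)
    (εA εB εC εX εY b11 b21 c11 c12 c21 c22 ρ θ1 θ2 θ3 : ℝ)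
    (hεA : εA = 1 ∨ εA = -1) (hεB : εB = 1 ∨ εB = -1) (hεC : εC = 1 ∨ εC = -1)
    (hεX : εX = 1 ∨ εX = -1) (hεY : εY = 1 ∨ εY = -1)
    (hgsymm : ∀ u v : V, g u v = g v u)
    (hgAA : g A A = εA) (hgBB : g B B = εB) (hgCC : g C C = εC)
    (hgXX : g X X = εX) (hgYY : g Y Y = εY)
    (hgAB : g A B = 0) (hgAC : g A C = 0) (hgAX : g A X = 0) (hgAY : g A Y = 0)
    (hgBC : g B C = 0) (hgBX : g B X = 0) (hgBY : g B Y = 0)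
    (hgCX : g C X = 0) (hgCY : g C Y = 0) (hgXY : g X Y = 0)
    (hskew : ∀ u v : V, br u v = - br v u)
    (hAB : br A B = (2:ℝ) • C) (hCA : br C A = (2:ℝ) • B) (hBC : br B C = (2:ℝ) • A)
    (hAX : br A X = -(b11 • B) - c11 • C) (hAY : br A Y = -(b21 • B) - c21 • C)
    (hBX : br B X = b11 • A - c12 • C) (hBY : br B Y = b21 • A - c22 • C)
    (hCX : br C X = c11 • A + c12 • B) (hCY : br C Y = c21 • A + c22 • B)
    (hXY : br X Y = ρ • X + θ1 • A + θ2 • B + θ3 • C)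
    (BV : V → V → V)
    (hBV : ∀ E F : V, BV E F =
      ((1:ℝ)/2) • ((εX * (g (br X E) F + g (br X F) E)) • X +
                   (εY * (g (br Y E) F + g (br Y F) E)) • Y))
    (hLI : LinearIndependent ℝ ![A, B, C, X, Y]) :
    ((2:ℝ) • BV A B = (εX * b11 * (εB - εA)) • X + (εY * b21 * (εB - εA)) • Y ∧
     (2:ℝ) • BV A C = (εX * c11 * (εC - εA)) • X + (εY * c21 * (εC - εA)) • Y ∧
     (2:ℝ) • BV B C = (εX * c12 * (εC - εB)) • X + (εY * c22 * (εC - εB)) • Y) ∧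
    ((∀ E ∈ Submodule.span ℝ {A, B, C}, ∀ F ∈ Submodule.span ℝ {A, B, C},
        BV E F = 0) ↔
      ((εB - εA) * b11 = 0 ∧ (εB - εA) * b21 = 0 ∧ (εC - εA) * c11 = 0 ∧
       (εC - εA) * c21 = 0 ∧ (εC - εB) * c12 = 0 ∧ (εC - εB) * c22 = 0)) := by
  -- brackets with X, Y on the left
  have hXA : br X A = b11 • B + c11 • C := by rw [hskew X A, hAX]; module
  have hXB : br X B = -(b11 • A) + c12 • C := by rw [hskew X B, hBX]; module
  have hXC : br X C = -(c11 • A) - c12 • B := by rw [hskew X C, hCX]; module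
  have hYA : br Y A = b21 • B + c21 • C := by rw [hskew Y A, hAY]; module
  have hYB : br Y B = -(b21 • A) + c22 • C := by rw [hskew Y B, hBY]; module
  have hYC : br Y C = -(c21 • A) - c22 • B := by rw [hskew Y C, hCY]; module
  have hgBA : g B A = 0 := by rw [hgsymm]; exact hgAB
  have hgCA : g C A = 0 := by rw [hgsymm]; exact hgAC
  have hgCB : g C B = 0 := by rw [hgsymm]; exact hgBC
  -- the three mixed formulas
  have h1 : (2:ℝ) • BV A B
      = (εX * b11 * (εB - εA)) • X + (εY * b21 * (εB - εA)) • Y := by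
    rw [hBV, hXA, hXB, hYA, hYB]
    simp only [map_add, map_smul, map_neg, map_sub, LinearMap.add_apply,
      LinearMap.smul_apply, LinearMap.neg_apply, LinearMap.sub_apply, smul_eq_mul,
      hgAA, hgBB, hgCC, hgAB, hgAC, hgBC, hgBA, hgCA, hgCB]
    match_scalars <;> ring
  have h2 : (2:ℝ) • BV A C
      = (εX * c11 * (εC - εA)) • X + (εY * c21 * (εC - εA)) • Y := by
    rw [hBV, hXA, hXC, hYA, hYC]
    simp only [map_add, map_smul, map_neg, map_sub, LinearMap.add_apply,
      LinearMap.smul_apply, LinearMap.neg_apply, LinearMap.sub_apply, smul_eq_mul,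
      hgAA, hgBB, hgCC, hgAB, hgAC, hgBC, hgBA, hgCA, hgCB]
    match_scalars <;> ring
  have h3 : (2:ℝ) • BV B C
      = (εX * c12 * (εC - εB)) • X + (εY * c22 * (εC - εB)) • Y := by
    rw [hBV, hXB, hXC, hYB, hYC]
    simp only [map_add, map_smul, map_neg, map_sub, LinearMap.add_apply,
      LinearMap.smul_apply, LinearMap.neg_apply, LinearMap.sub_apply, smul_eq_mul,
      hgAA, hgBB, hgCC, hgAB, hgAC, hgBC, hgBA, hgCA, hgCB]
    match_scalars <;> ring
  -- linear independence of X, Y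
  have hindep : ∀ s t : ℝ, s • X + t • Y = 0 → s = 0 ∧ t = 0 := by
    intro s t h
    have h5 := Fintype.linearIndependent_iff.mp hLI ![0, 0, 0, s, t] (by
      simpa [Fin.sum_univ_five] using h)
    exact ⟨by simpa using h5 3, by simpa using h5 4⟩
  have hεX0 : εX ≠ 0 := by rcases hεX with h | h <;> rw [h] <;> norm_num
  have hεY0 : εY ≠ 0 := by rcases hεY with h | h <;> rw [h] <;> norm_num
  refine ⟨⟨h1, h2, h3⟩, ?_, ?_⟩
  · -- totally geodesic → scalar conditions
    intro hz
    have hA : A ∈ Submodule.span ℝ ({A, B, C} : Set V) :=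
      Submodule.subset_span (by simp)
    have hB : B ∈ Submodule.span ℝ ({A, B, C} : Set V) :=
      Submodule.subset_span (by simp)
    have hC : C ∈ Submodule.span ℝ ({A, B, C} : Set V) :=
      Submodule.subset_span (by simp)
    have e1 : (εX * b11 * (εB - εA)) • X + (εY * b21 * (εB - εA)) • Y = 0 := by
      rw [← h1, hz A hA B hB, smul_zero]
    have e2 : (εX * c11 * (εC - εA)) • X + (εY * c21 * (εC - εA)) • Y = 0 := by
      rw [← h2, hz A hA C hC, smul_zero]
    have e3 : (εX * c12 * (εC - εB)) • X + (εY * c22 * (εC - εB)) • Y = 0 := by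
      rw [← h3, hz B hB C hC, smul_zero]
    obtain ⟨e1x, e1y⟩ := hindep _ _ e1
    obtain ⟨e2x, e2y⟩ := hindep _ _ e2
    obtain ⟨e3x, e3y⟩ := hindep _ _ e3
    refine ⟨?_, ?_, ?_, ?_, ?_, ?_⟩
    · have := mul_eq_zero.mp (by linear_combination e1x : εX * (b11 * (εB - εA)) = 0)
      rcases this with h | h
      · exact absurd h hεX0
      · linear_combination h
    · have := mul_eq_zero.mp (by linear_combination e1y : εY * (b21 * (εB - εA)) = 0)
      rcases this with h | h
      · exact absurd h hεY0
      · linear_combination h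
    · have := mul_eq_zero.mp (by linear_combination e2x : εX * (c11 * (εC - εA)) = 0)
      rcases this with h | h
      · exact absurd h hεX0
      · linear_combination h
    · have := mul_eq_zero.mp (by linear_combination e2y : εY * (c21 * (εC - εA)) = 0)
      rcases this with h | h
      · exact absurd h hεY0
      · linear_combination h
    · have := mul_eq_zero.mp (by linear_combination e3x : εX * (c12 * (εC - εB)) = 0)
      rcases this with h | h
      · exact absurd h hεX0
      · linear_combination h
    · have := mul_eq_zero.mp (by linear_combination e3y : εY * (c22 * (εC - εB)) = 0)
      rcases this with h | h
      · exact absurd h hεY0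
      · linear_combination h
  · -- scalar conditions → totally geodesic
    rintro ⟨k1, k2, k3, k4, k5, k6⟩ E hE F hF
    -- symmetry of BV
    have hsymm : ∀ u v : V, BV u v = BV v u := by
      intro u v; rw [hBV, hBV]; ring_nf
    -- BV vanishes at the basic pairs
    have two_ne : (2:ℝ) ≠ 0 := by norm_num
    have smul2 : ∀ v : V, (2:ℝ) • v = 0 → v = 0 := by
      intro v h
      rcases smul_eq_zero.mp h with h | h
      · exact absurd h two_ne
      · exact h
    have hAB0 : BV A B = 0 := by
      apply smul2; rw [h1]
      have : εX * b11 * (εB - εA) = 0 := by linear_combination εX * k1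
      rw [this]
      have : εY * b21 * (εB - εA) = 0 := by linear_combination εY * k2
      rw [this, zero_smul, zero_smul, add_zero]
    have hAC0 : BV A C = 0 := by
      apply smul2; rw [h2]
      have : εX * c11 * (εC - εA) = 0 := by linear_combination εX * k3
      rw [this]
      have : εY * c21 * (εC - εA) = 0 := by linear_combination εY * k4
      rw [this, zero_smul, zero_smul, add_zero]
    have hBC0 : BV B C = 0 := by
      apply smul2; rw [h3]
      have : εX * c12 * (εC - εB) = 0 := by linear_combination εX * k5
      rw [this]
      have : εY * c22 * (εC - εB) = 0 := by linear_combination εY * k6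
      rw [this, zero_smul, zero_smul, add_zero]
    have hAA0 : BV A A = 0 := by
      rw [hBV, hXA, hYA]
      simp only [map_add, map_smul, LinearMap.add_apply, LinearMap.smul_apply,
        smul_eq_mul, hgBA, hgCA]
      match_scalars <;> ring
    have hBB0 : BV B B = 0 := by
      rw [hBV, hXB, hYB]
      simp only [map_add, map_smul, map_neg, LinearMap.add_apply,
        LinearMap.smul_apply, LinearMap.neg_apply, smul_eq_mul, hgAB, hgCB]
      match_scalars <;> ring
    have hCC0 : BV C C = 0 := by
      rw [hBV, hXC, hYC]
      simp only [map_add, map_sub, map_smul, map_neg, LinearMap.add_apply,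
        LinearMap.sub_apply, LinearMap.smul_apply, LinearMap.neg_apply,
        smul_eq_mul, hgAC, hgBC]
      match_scalars <;> ring
    -- bilinearity of BV
    have haddl : ∀ u u' v : V, BV (u + u') v = BV u v + BV u' v := by
      intro u u' v
      rw [hBV, hBV, hBV]
      simp only [map_add, LinearMap.add_apply]
      match_scalars <;> ring
    have hsmull : ∀ (a : ℝ) (u v : V), BV (a • u) v = a • BV u v := by
      intro a u v
      rw [hBV, hBV]
      simp only [map_smul, LinearMap.smul_apply, smul_eq_mul]
      match_scalars <;> ring
    have hzerol : ∀ v : V, BV 0 v = 0 := by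
      intro v
      have := hsmull 0 0 v
      simpa using this
    -- double span induction
    induction hE, hF using Submodule.span_induction₂ with
    | mem_mem x y hx hy =>
      rcases hx with rfl | rfl | rfl <;> rcases hy with rfl | rfl | rfl
      · exact hAA0
      · exact hAB0
      · exact hAC0
      · rw [hsymm]; exact hAB0
      · exact hBB0
      · exact hBC0
      · rw [hsymm]; exact hAC0
      · rw [hsymm]; exact hBC0
      · exact hCC0
    | zero_left y hy => exact hzerol y
    | zero_right x hx => rw [hsymm]; exact hzerol x
    | add_left x y z hx hy hz h1 h2 => rw [haddl, h1, h2, add_zero]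
    | add_right x y z hx hy hz h1 h2 =>
        rw [hsymm, haddl, hsymm y x, hsymm z x, h1, h2, add_zero]
    | smul_left a x y hx hy h => rw [hsmull, h, smul_zero]
    | smul_right a x y hx hy h =>
        rw [hsymm, hsmull, hsymm y x, h, smul_zero]
end

section
/- If the semi-Riemannian inner product on the five-dimensional Lie algebra of the SU(2)-foliation is Riemannian (all causal characters equal to +1), then the foliation generated by su(2) is automatically totally geodesic, i.e. B^V(E,F) = 0 for all E,F ∈ span{A,B,C}, for any values of the structure constants b₁₁,b₂₁,c₁₁,c₁₂,c₂₁,c₂₂,ρ. -/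
/-- in the Riemannian case (all causal characters `+1`) the foliation
generated by `su(2)` is automatically totally geodesic: `B^V(E,F) = 0` for all
`E, F ∈ span{A, B, C}`, for any values of the structure constants. -/
theorem stmt_7 {V : Type*} [AddCommGroup V] [Module ℝ V]
    (br : V →ₗ[ℝ] V →ₗ[ℝ] V) (g : V →ₗ[ℝ] V →ₗ[ℝ] ℝ)
    (A B C X Y : V)
    (εA εB εC εX εY b11 b21 c11 c12 c21 c22 ρ θ1 θ2 θ3 : ℝ)
    (hεA : εA = 1) (hεB : εB = 1) (hεC : εC = 1)
    (hεX : εX = 1) (hεY : εY = 1)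
    (hgsymm : ∀ u v : V, g u v = g v u)
    (hgAA : g A A = εA) (hgBB : g B B = εB) (hgCC : g C C = εC)
    (hgXX : g X X = εX) (hgYY : g Y Y = εY)
    (hgAB : g A B = 0) (hgAC : g A C = 0) (hgAX : g A X = 0) (hgAY : g A Y = 0)
    (hgBC : g B C = 0) (hgBX : g B X = 0) (hgBY : g B Y = 0)
    (hgCX : g C X = 0) (hgCY : g C Y = 0) (hgXY : g X Y = 0)
    (hskew : ∀ u v : V, br u v = - br v u)
    (hAB : br A B = (2:ℝ) • C) (hCA : br C A = (2:ℝ) • B) (hBC : br B C = (2:ℝ) • A)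
    (hAX : br A X = -(b11 • B) - c11 • C) (hAY : br A Y = -(b21 • B) - c21 • C)
    (hBX : br B X = b11 • A - c12 • C) (hBY : br B Y = b21 • A - c22 • C)
    (hCX : br C X = c11 • A + c12 • B) (hCY : br C Y = c21 • A + c22 • B)
    (hXY : br X Y = ρ • X + θ1 • A + θ2 • B + θ3 • C)
    (BV : V → V → V)
    (hBV : ∀ E F : V, BV E F =
      ((1:ℝ)/2) • ((εX * (g (br X E) F + g (br X F) E)) • X +
                   (εY * (g (br Y E) F + g (br Y F) E)) • Y))
    :
    ∀ E ∈ Submodule.span ℝ {A, B, C}, ∀ F ∈ Submodule.span ℝ {A, B, C},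
      BV E F = 0 := by
  have hgBA : g B A = 0 := by rw [hgsymm]; exact hgAB
  have hgCA : g C A = 0 := by rw [hgsymm]; exact hgAC
  have hgCB : g C B = 0 := by rw [hgsymm]; exact hgBC
  have hXA : br X A = b11 • B + c11 • C := by
    rw [hskew, hAX]; module
  have hXB : br X B = -(b11 • A) + c12 • C := by
    rw [hskew, hBX]; module
  have hXC : br X C = -(c11 • A) - c12 • B := by
    rw [hskew, hCX]; module
  have hYA : br Y A = b21 • B + c21 • C := by
    rw [hskew, hAY]; module
  have hYB : br Y B = -(b21 • A) + c22 • C := by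
    rw [hskew, hBY]; module
  have hYC : br Y C = -(c21 • A) - c22 • B := by
    rw [hskew, hCY]; module
  -- the symmetric bilinear forms vanish on generators
  have key : ∀ u ∈ ({A, B, C} : Set V), ∀ v ∈ ({A, B, C} : Set V),
      g (br X u) v + g (br X v) u = 0 ∧ g (br Y u) v + g (br Y v) u = 0 := by
    rintro u (rfl | rfl | rfl) v (rfl | rfl | rfl) <;> constructor <;>
      simp [hXA, hXB, hXC, hYA, hYB, hYC, hgAA, hgBB, hgCC, hgAB, hgAC, hgBC,
        hgBA, hgCA, hgCB, hεA, hεB, hεC] <;> ring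
  have main : ∀ E ∈ Submodule.span ℝ ({A, B, C} : Set V),
      ∀ F ∈ Submodule.span ℝ ({A, B, C} : Set V),
      g (br X E) F + g (br X F) E = 0 ∧ g (br Y E) F + g (br Y F) E = 0 := by
    intro E hE
    induction hE using Submodule.span_induction with
    | mem u hu =>
      intro F hF
      induction hF using Submodule.span_induction with
      | mem v hv => exact key u hu v hv
      | zero => simp
      | add x y hx hy ihx ihy =>
        constructor
        · have h1 := ihx.1; have h2 := ihy.1
          simp only [map_add, LinearMap.add_apply]
          linear_combination h1 + h2
        · have h1 := ihx.2; have h2 := ihy.2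
          simp only [map_add, LinearMap.add_apply]
          linear_combination h1 + h2
      | smul a x hx ihx =>
        constructor
        · have h := ihx.1
          simp only [map_smul, LinearMap.smul_apply, smul_eq_mul]
          linear_combination a * h
        · have h := ihx.2
          simp only [map_smul, LinearMap.smul_apply, smul_eq_mul]
          linear_combination a * h
    | zero => intro F hF; simp
    | add x y hx hy ihx ihy =>
      intro F hF
      have h1 := (ihx F hF).1; have h2 := (ihy F hF).1
      have h3 := (ihx F hF).2; have h4 := (ihy F hF).2
      constructor
      · simp only [map_add, LinearMap.add_apply]; linear_combination h1 + h2
      · simp only [map_add, LinearMap.add_apply]; linear_combination h3 + h4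
    | smul a x hx ihx =>
      intro F hF
      have h1 := (ihx F hF).1; have h2 := (ihx F hF).2
      constructor
      · simp only [map_smul, LinearMap.smul_apply, smul_eq_mul]
        linear_combination a * h1
      · simp only [map_smul, LinearMap.smul_apply, smul_eq_mul]
        linear_combination a * h2
  intro E hE F hF
  rw [hBV, (main E hE F hF).1, (main E hE F hF).2]
  simp
end

section
/- Let g be the bracket structure on basis {A,B,C,X,Y} with [A,B]=2C, [C,A]=2B, [B,C]=−2A (so span{A,B,C} ≅ sl(2,ℝ)), [A,X]=b₁₁B+c₁₁C, [A,Y]=b₂₁B+c₂₁C, [B,X]=b₁₁A−c₁₂C, [B,Y]=b₂₁A−c₂₂C, [C,X]=c₁₁A+c₁₂B, [C,Y]=c₂₁A+c₂₂B, [X,Y]=ρX+θ₁A+θ₂B+θ₃C. The Jacobi identity holds if and only if θ₁ = ½(−ρc₁₂ − c₂₁b₁₁ + c₁₁b₂₁), θ₂ = ½(−ρc₁₁ − c₂₂b₁₁ + c₁₂b₂₁), θ₃ = ½(ρb₁₁ − c₂₂c₁₁ + c₁₂c₂₁). -/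
/-!
The Jacobiator `J(u, v, w) = [[u, v], w] + [[v, w], u] + [[w, u], v]` is trilinear, so the Jacobi
identity holds everywhere as soon as it holds on triples of basis vectors. Expanding with the
bracket relations, `J(A, X, Y)` is a combination of `B` and `C` and `J(B, X, Y)` one of `A` and `C`
whose coefficients are, up to a factor `2`, the differences between the `θᵢ` and the claimed values;
linear independence then forces the formulas. Conversely, once the `θᵢ` take these values, `J`
vanishes on every basis triple by direct expansion.
-/

namespace LinearMap

variable {R M N : Type*} [CommRing R] [AddCommGroup M] [Module R M] [AddCommGroup N] [Module R N]

def rotateArgs (f : M →ₗ[R] M →ₗ[R] M →ₗ[R] N) : M →ₗ[R] M →ₗ[R] M →ₗ[R] N :=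
  ((lflip (R₀ := R)).toLinearMap ∘ₗ f).flip

@[simp]
theorem rotateArgs_apply (f : M →ₗ[R] M →ₗ[R] M →ₗ[R] N) (u v w : M) :
    f.rotateArgs u v w = f v w u :=
  rfl

def jacobiator (br : M →ₗ[R] M →ₗ[R] M) : M →ₗ[R] M →ₗ[R] M →ₗ[R] M :=
  br.compr₂ br + (br.compr₂ br).rotateArgs + (br.compr₂ br).rotateArgs.rotateArgs

@[simp]
theorem jacobiator_apply (br : M →ₗ[R] M →ₗ[R] M) (u v w : M) :
    br.jacobiator u v w = br (br u v) w + br (br v w) u + br (br w u) v :=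
  rfl

theorem ext_on₃ {s : Set M} (hs : Submodule.span R s = ⊤) {f g : M →ₗ[R] M →ₗ[R] M →ₗ[R] N}
    (h : ∀ x ∈ s, ∀ y ∈ s, ∀ z ∈ s, f x y z = g x y z) : f = g :=
  ext_on hs fun _ hx ↦ ext_on hs fun _ hy ↦ ext_on hs fun _ hz ↦ h _ hx _ hy _ hz

end LinearMap

theorem LinearIndependent.pair_of_ne {R M ι : Type*} [Ring R] [AddCommGroup M] [Module R M]
    {v : ι → M} (hv : LinearIndependent R v) {i j : ι} (hij : i ≠ j) :
    LinearIndependent R ![v i, v j] := by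
  convert hv.comp ![i, j] ?_ using 1
  · ext k
    fin_cases k <;> rfl
  · intro a b hab
    fin_cases a <;> fin_cases b <;> simp_all [hij.symm]

/-- Proposition, SL(2,ℝ) case: the bracket defined by the given
relations on the basis `{A,B,C,X,Y}` (with `span{A,B,C} ≅ sl(2,ℝ)`) satisfies
the Jacobi identity iff
`θ₁ = ½(−ρc₁₂ − c₂₁b₁₁ + c₁₁b₂₁)`, `θ₂ = ½(−ρc₁₁ − c₂₂b₁₁ + c₁₂b₂₁)`,
`θ₃ = ½(ρb₁₁ − c₂₂c₁₁ + c₁₂c₂₁)`. -/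
theorem stmt_8 {V : Type*} [AddCommGroup V] [Module ℝ V]
    (br : V →ₗ[ℝ] V →ₗ[ℝ] V)
    (A B C X Y : V)
    (b11 b21 c11 c12 c21 c22 ρ θ1 θ2 θ3 : ℝ)
    (hLI : LinearIndependent ℝ ![A, B, C, X, Y])
    (hspan : Submodule.span ℝ {A, B, C, X, Y} = ⊤)
    (hskew : ∀ u v : V, br u v = - br v u)
    (hAB : br A B = (2:ℝ) • C) (hCA : br C A = (2:ℝ) • B) (hBC : br B C = -((2:ℝ) • A))
    (hAX : br A X = b11 • B + c11 • C) (hAY : br A Y = b21 • B + c21 • C)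
    (hBX : br B X = b11 • A - c12 • C) (hBY : br B Y = b21 • A - c22 • C)
    (hCX : br C X = c11 • A + c12 • B) (hCY : br C Y = c21 • A + c22 • B)
    (hXY : br X Y = ρ • X + θ1 • A + θ2 • B + θ3 • C) :
    (∀ u v w : V, br (br u v) w + br (br v w) u + br (br w u) v = 0) ↔
      (θ1 = (1/2) * (-ρ * c12 - c21 * b11 + c11 * b21) ∧
       θ2 = (1/2) * (-ρ * c11 - c22 * b11 + c12 * b21) ∧
       θ3 = (1/2) * (ρ * b11 - c22 * c11 + c12 * c21)) := by
  have := IsAddTorsionFree.of_isTorsionFree ℝ V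
  have hself (u : V) : br u u = 0 := self_eq_neg.mp (hskew u u)
  have hBA : br B A = -((2:ℝ) • C) := by rw [hskew, hAB]
  have hAC : br A C = -((2:ℝ) • B) := by rw [hskew, hCA]
  have hCB : br C B = (2:ℝ) • A := by rw [hskew, hBC, neg_neg]
  have hXA : br X A = -(b11 • B + c11 • C) := by rw [hskew, hAX]
  have hYA : br Y A = -(b21 • B + c21 • C) := by rw [hskew, hAY]
  have hXB : br X B = -(b11 • A - c12 • C) := by rw [hskew, hBX]
  have hYB : br Y B = -(b21 • A - c22 • C) := by rw [hskew, hBY]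
  have hXC : br X C = -(c11 • A + c12 • B) := by rw [hskew, hCX]
  have hYC : br Y C = -(c21 • A + c22 • B) := by rw [hskew, hCY]
  have hYX : br Y X = -(ρ • X + θ1 • A + θ2 • B + θ3 • C) := by rw [hskew, hXY]
  clear hskew
  constructor
  · intro hJ
    have hAXY := hJ A X Y
    have hBXY := hJ B X Y
    simp only [*, map_add, map_sub, map_smul, map_neg, LinearMap.add_apply, LinearMap.sub_apply,
      LinearMap.smul_apply, LinearMap.neg_apply] at hAXY hBXY
    have hBC : LinearIndependent ℝ ![B, C] := hLI.pair_of_ne (i := 1) (j := 2) (by decide)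
    have hAC : LinearIndependent ℝ ![A, C] := hLI.pair_of_ne (i := 0) (j := 2) (by decide)
    obtain ⟨h3, h2⟩ := LinearIndependent.pair_iff.mp hBC
      (2 * θ3 - (ρ * b11 - c22 * c11 + c12 * c21)) (-2 * θ2 - (ρ * c11 + c22 * b11 - c12 * b21))
      (by linear_combination (norm := module) hAXY)
    obtain ⟨-, h1⟩ := LinearIndependent.pair_iff.mp hAC
      (2 * θ3 - (ρ * b11 - c22 * c11 + c12 * c21)) (2 * θ1 + (ρ * c12 + c21 * b11 - c11 * b21))
      (by linear_combination (norm := module) hBXY)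
    exact ⟨by linarith, by linarith, by linarith⟩
  · rintro ⟨rfl, rfl, rfl⟩ u v w
    rw [← LinearMap.jacobiator_apply]
    suffices br.jacobiator = 0 by rw [this]; rfl
    refine LinearMap.ext_on₃ hspan ?_
    simp only [Set.mem_insert_iff, Set.mem_singleton_iff]
    rintro x (rfl | rfl | rfl | rfl | rfl) y (rfl | rfl | rfl | rfl | rfl)
      z (rfl | rfl | rfl | rfl | rfl) <;>
    simp only [*, LinearMap.jacobiator_apply, map_add, map_sub, map_smul, map_neg, map_zero,
      LinearMap.add_apply, LinearMap.sub_apply, LinearMap.smul_apply, LinearMap.neg_apply,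
      LinearMap.zero_apply, smul_zero, neg_zero, add_zero, zero_add] <;>
    module
end

section
/- Let g be a semi-Riemannian Lie algebra with a subalgebra k satisfying [k,k] = k (semisimple/perfect), generating a conformal foliation of codimension two, i.e. with orthogonal decomposition g = k ⊕ m, dim m = 2, and H[[V,V],H] = 0 where H denotes projection to m. Then the foliation is semi-Riemannian: H[V, H'] = 0 for all V ∈ k and H' ∈ m, and the mean curvature vector of the horizontal distribution vanishes. -/
/-- Corollary: a semi-Riemannian Lie algebra `g = k ⊕ m` with `k`
a perfect (semisimple) subalgebra, `m = k^⊥` of dimension two, and the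
conformality condition `H[[V,V],H] = 0`, generates a semi-Riemannian foliation:
`H[V,H'] = 0` for all `V ∈ k`, `H' ∈ m`, and the second fundamental form
`B^H(E,F) = ½·proj_k(∇_E F + ∇_F E)` of the horizontal distribution vanishes
(in particular its mean curvature vector vanishes). Here `∇` is the
Levi-Civita connection given by the Koszul formula. -/
theorem stmt_13 {L : Type*} [LieRing L] [LieAlgebra ℝ L]
    (g : L →ₗ[ℝ] L →ₗ[ℝ] ℝ)
    (hgsymm : ∀ u v : L, g u v = g v u)
    (hgnondeg : ∀ x : L, (∀ y : L, g x y = 0) → x = 0)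
    (k m : Submodule ℝ L)
    (hsum : k ⊔ m = ⊤)
    (hperp : ∀ a ∈ k, ∀ b ∈ m, g a b = 0)
    (hdim : Module.finrank ℝ m = 2)
    (hksub : ∀ v ∈ k, ∀ w ∈ k, ⁅v, w⁆ ∈ k)
    (hperf : k ≤ Submodule.span ℝ {x : L | ∃ a ∈ k, ∃ b ∈ k, x = ⁅a, b⁆})
    (πk πm : L →ₗ[ℝ] L)
    (hπk1 : ∀ x ∈ k, πk x = x) (hπk0 : ∀ x ∈ m, πk x = 0)
    (hπm1 : ∀ x ∈ m, πm x = x) (hπm0 : ∀ x ∈ k, πm x = 0)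
    (hconf : ∀ v₁ ∈ k, ∀ v₂ ∈ k, ∀ h ∈ m, πm ⁅⁅v₁, v₂⁆, h⁆ = 0)
    (nabla : L →ₗ[ℝ] L →ₗ[ℝ] L)
    (hkoszul : ∀ x y z : L,
      2 * g (nabla x y) z = g ⁅z, x⁆ y + g ⁅z, y⁆ x + g z ⁅x, y⁆) :
    (∀ v ∈ k, ∀ h ∈ m, πm ⁅v, h⁆ = 0) ∧
    (∀ e ∈ m, ∀ f ∈ m, πk (nabla e f + nabla f e) = 0) := by

  -- decomposition of any element
  have hdec : ∀ x : L, πk x ∈ k ∧ πm x ∈ m ∧ πk x + πm x = x := by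
    intro x
    have hx : x ∈ k ⊔ m := by rw [hsum]; trivial
    rcases Submodule.mem_sup.mp hx with ⟨a, ha, b, hb, rfl⟩
    have h1 : πk (a + b) = a := by rw [map_add, hπk1 a ha, hπk0 b hb, add_zero]
    have h2 : πm (a + b) = b := by rw [map_add, hπm0 a ha, hπm1 b hb, zero_add]
    rw [h1, h2]
    exact ⟨ha, hb, rfl⟩
  -- part 1
  have part1 : ∀ v ∈ k, ∀ h ∈ m, πm ⁅v, h⁆ = 0 := by
    intro v hv h hm
    have hv' := hperf hv
    clear hv
    induction hv' using Submodule.span_induction with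
    | mem x hx =>
      rcases hx with ⟨a, ha, b, hb, rfl⟩
      exact hconf a ha b hb h hm
    | zero => simp
    | add x y hx hy ihx ihy => rw [add_lie, map_add, ihx, ihy, add_zero]
    | smul c x hx ihx => rw [smul_lie, map_smul, ihx, smul_zero]
  refine ⟨part1, ?_⟩
  intro e he f hf
  -- bracket with k element lands in k
  have hbr : ∀ w ∈ k, ∀ h ∈ m, ⁅w, h⁆ ∈ k := by
    intro w hw h hm
    obtain ⟨hk1, _, hsum1⟩ := hdec ⁅w, h⁆
    rw [part1 w hw h hm, add_zero] at hsum1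
    rw [← hsum1]; exact hk1
  -- g (nabla e f + nabla f e) w = 0 for w ∈ k
  have hkey : ∀ w ∈ k, g (nabla e f + nabla f e) w = 0 := by
    intro w hw
    have h1 := hkoszul e f w
    have h2 := hkoszul f e w
    have hfe' : (⁅f, e⁆ : L) = -⁅e, f⁆ := by rw [lie_skew]
    have hfe : g w ⁅f, e⁆ = - g w ⁅e, f⁆ := by rw [hfe', map_neg]
    have hb1 : g ⁅w, e⁆ f = 0 := hperp _ (hbr w hw e he) _ hf
    have hb2 : g ⁅w, f⁆ e = 0 := hperp _ (hbr w hw f hf) _ he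
    have : 2 * g (nabla e f + nabla f e) w = 0 := by
      rw [map_add, LinearMap.add_apply]
      rw [mul_add, h1, h2, hfe, hb1, hb2]
      ring
    linarith
  -- conclude πk (...) = 0 by nondegeneracy
  set x := nabla e f + nabla f e with hxdef
  obtain ⟨hxk, hxm, hxs⟩ := hdec x
  apply hgnondeg
  intro y
  obtain ⟨hyk, hym, hys⟩ := hdec y
  have e1 : g (πk x) (πm y) = 0 := hperp _ hxk _ hym
  have e2 : g (πm x) (πk y) = 0 := by rw [hgsymm]; exact hperp _ hyk _ hxm
  have e3 : g x (πk y) = 0 := hkey _ hyk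
  have : g (πk x) (πk y) = 0 := by
    have := congrArg (fun z => g z (πk y)) hxs
    simp only [map_add, LinearMap.add_apply] at this
    rw [e2, add_zero] at this
    rw [this, e3]
  calc g (πk x) y = g (πk x) (πk y + πm y) := by rw [hys]
    _ = g (πk x) (πk y) + g (πk x) (πm y) := by rw [map_add]
    _ = 0 := by rw [this, e1, add_zero]
end

section
/- Let g be a six-dimensional Lie algebra with orthonormal basis {A,B,C,T,X,Y} where span{A,B,C} ≅ su(2), T spans so(2), and [T,X] = x₁X + y₁Y + (vertical terms), [T,Y] = x₂X + y₂Y + (vertical terms). Then the foliation tangent to span{A,B,C,T} is conformal if and only if x₁ = y₂ and ε_X x₂ + ε_Y y₁ = 0; in that case it is semi-Riemannian if and only if x₁ = y₂ = 0. -/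
/-- Lemma, SU(2)×SO(2) case: the foliation tangent to
`span{A,B,C,T}` is conformal iff `x₁ = y₂` and `εX·x₂ + εY·y₁ = 0`; in that
case it is semi-Riemannian iff `x₁ = y₂ = 0`. -/
theorem stmt_14 {L : Type*} [AddCommGroup L] [Module ℝ L]
    (br : L →ₗ[ℝ] L →ₗ[ℝ] L) (g : L →ₗ[ℝ] L →ₗ[ℝ] ℝ)
    (A B C T X Y : L)
    (εA εB εC εT εX εY x1 y1 x2 y2 : ℝ)
    (hεA : εA = 1 ∨ εA = -1) (hεB : εB = 1 ∨ εB = -1) (hεC : εC = 1 ∨ εC = -1)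
    (hεT : εT = 1 ∨ εT = -1) (hεX : εX = 1 ∨ εX = -1) (hεY : εY = 1 ∨ εY = -1)
    (hLI : LinearIndependent ℝ ![A, B, C, T, X, Y])
    (hgsymm : ∀ u v : L, g u v = g v u)
    (hgAA : g A A = εA) (hgBB : g B B = εB) (hgCC : g C C = εC)
    (hgTT : g T T = εT) (hgXX : g X X = εX) (hgYY : g Y Y = εY)
    (hgAB : g A B = 0) (hgAC : g A C = 0) (hgAT : g A T = 0)
    (hgAX : g A X = 0) (hgAY : g A Y = 0)
    (hgBC : g B C = 0) (hgBT : g B T = 0) (hgBX : g B X = 0) (hgBY : g B Y = 0)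
    (hgCT : g C T = 0) (hgCX : g C X = 0) (hgCY : g C Y = 0)
    (hgTX : g T X = 0) (hgTY : g T Y = 0) (hgXY : g X Y = 0)
    (hskew : ∀ u v : L, br u v = - br v u)
    (hAB : br A B = (2:ℝ) • C) (hCA : br C A = (2:ℝ) • B) (hBC : br B C = (2:ℝ) • A)
    (hAT : br A T = 0) (hBT : br B T = 0) (hCT : br C T = 0)
    (hvert : ∀ v ∈ ({A, B, C} : Set L),
      br v X ∈ Submodule.span ℝ ({A, B, C, T} : Set L) ∧
      br v Y ∈ Submodule.span ℝ ({A, B, C, T} : Set L))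
    (vX vY : L)
    (hvX : vX ∈ Submodule.span ℝ ({A, B, C, T} : Set L))
    (hvY : vY ∈ Submodule.span ℝ ({A, B, C, T} : Set L))
    (hTX : br T X = x1 • X + y1 • Y + vX)
    (hTY : br T Y = x2 • X + y2 • Y + vY)
    (BH : L → L → L)
    (hBH : ∀ E F : L, BH E F =
      ((1:ℝ)/2) • ((εA * (g (br E A) F + g (br F A) E)) • A +
                   (εB * (g (br E B) F + g (br F B) E)) • B +
                   (εC * (g (br E C) F + g (br F C) E)) • C +
                   (εT * (g (br E T) F + g (br F T) E)) • T)) :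
    ((εX • BH X X - εY • BH Y Y = 0 ∧ BH X Y = 0) ↔
       (x1 = y2 ∧ εX * x2 + εY * y1 = 0)) ∧
    ((εX • BH X X - εY • BH Y Y = 0 ∧ BH X Y = 0) →
       ((εX • BH X X + εY • BH Y Y = 0) ↔ (x1 = 0 ∧ y2 = 0))) := by
  have hT0 : T ≠ 0 := by
    have h := hLI.ne_zero 3
    simpa using h
  have hεTne : εT ≠ 0 := by rcases hεT with h | h <;> rw [h] <;> norm_num
  have hX2 : εX * εX = 1 := by rcases hεX with h | h <;> rw [h] <;> norm_num
  have hY2 : εY * εY = 1 := by rcases hεY with h | h <;> rw [h] <;> norm_num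
  have hgYX : g Y X = 0 := by rw [hgsymm]; exact hgXY
  -- vertical vectors are g-orthogonal to X and Y
  have hgV : ∀ v ∈ Submodule.span ℝ ({A, B, C, T} : Set L), g v X = 0 ∧ g v Y = 0 := by
    intro v hv
    induction hv using Submodule.span_induction with
    | mem w hw =>
      simp only [Set.mem_insert_iff, Set.mem_singleton_iff] at hw
      rcases hw with rfl | rfl | rfl | rfl <;> exact ⟨by assumption, by assumption⟩
    | zero => simp
    | add x y _ _ hx hy => simp [hx.1, hx.2, hy.1, hy.2]
    | smul a x _ hx => simp [hx.1, hx.2]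
  have hbr : ∀ v ∈ ({A, B, C} : Set L),
      (g (br X v) X = 0 ∧ g (br X v) Y = 0) ∧ (g (br Y v) X = 0 ∧ g (br Y v) Y = 0) := by
    intro v hv
    have m1 : br X v ∈ Submodule.span ℝ ({A, B, C, T} : Set L) := by
      rw [hskew X v]; exact Submodule.neg_mem _ (hvert v hv).1
    have m2 : br Y v ∈ Submodule.span ℝ ({A, B, C, T} : Set L) := by
      rw [hskew Y v]; exact Submodule.neg_mem _ (hvert v hv).2
    exact ⟨hgV _ m1, hgV _ m2⟩
  obtain ⟨⟨hAXX, hAXY⟩, hAYX, hAYY⟩ := hbr A (by simp)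
  obtain ⟨⟨hBXX, hBXY⟩, hBYX, hBYY⟩ := hbr B (by simp)
  obtain ⟨⟨hCXX, hCXY⟩, hCYX, hCYY⟩ := hbr C (by simp)
  have gXTX : g (br X T) X = -(εX * x1) := by
    rw [hskew X T, hTX]
    simp [hgXX, hgYX, (hgV vX hvX).1, mul_comm]
  have gXTY : g (br X T) Y = -(εY * y1) := by
    rw [hskew X T, hTX]
    simp [hgYY, hgXY, (hgV vX hvX).2, mul_comm]
  have gYTX : g (br Y T) X = -(εX * x2) := by
    rw [hskew Y T, hTY]
    simp [hgXX, hgYX, (hgV vY hvY).1, mul_comm]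
  have gYTY : g (br Y T) Y = -(εY * y2) := by
    rw [hskew Y T, hTY]
    simp [hgYY, hgXY, (hgV vY hvY).2, mul_comm]
  have eXX : BH X X = (-(εT * (εX * x1))) • T := by
    rw [hBH X X, hAXX, hBXX, hCXX, gXTX]; module
  have eYY : BH Y Y = (-(εT * (εY * y2))) • T := by
    rw [hBH Y Y, hAYY, hBYY, hCYY, gYTY]; module
  have eXY : BH X Y = ((-(1/2)) * (εT * (εX * x2 + εY * y1))) • T := by
    rw [hBH X Y, hAXY, hBXY, hCXY, hAYX, hBYX, hCYX, gXTY, gYTX]; module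
  have c1 : εX • BH X X - εY • BH Y Y = (εT * (y2 - x1)) • T := by
    rw [eXX, eYY]
    match_scalars
    linear_combination (-(εT * x1)) * hX2 + (εT * y2) * hY2
  have c2 : εX • BH X X + εY • BH Y Y = (-(εT * (x1 + y2))) • T := by
    rw [eXX, eYY]
    match_scalars
    linear_combination (-(εT * x1)) * hX2 + (-(εT * y2)) * hY2
  have iff1 : (εX • BH X X - εY • BH Y Y = 0) ↔ x1 = y2 := by
    rw [c1, smul_eq_zero]
    simp only [hT0, or_false, mul_eq_zero, hεTne, false_or, sub_eq_zero]
    exact eq_comm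
  have iff2 : (BH X Y = 0) ↔ εX * x2 + εY * y1 = 0 := by
    rw [eXY, smul_eq_zero]
    simp only [hT0, or_false, mul_eq_zero, hεTne, false_or]
    norm_num
  have iff3 : (εX • BH X X + εY • BH Y Y = 0) ↔ x1 + y2 = 0 := by
    rw [c2, smul_eq_zero]
    simp only [hT0, or_false, neg_eq_zero, mul_eq_zero, hεTne, false_or]
  refine ⟨and_congr iff1 iff2, ?_⟩
  intro h
  have hx : x1 = y2 := (iff1.mp h.1)
  rw [iff3]
  constructor
  · intro hs; constructor <;> linarith
  · intro ⟨h1, h2⟩; linarith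
end

section
/- In the six-dimensional Lie algebra with subalgebra su(2) ⊕ so(2) = span{A,B,C,T} described in Theorem (SU(2)×SO(2) case), with [T,X] = x₁X + y₁Y + (vertical) + t₁₄T and [T,Y] = x₂X + y₂Y + (vertical) + t₂₄T, the foliation generated by SU(2)×SO(2) is minimal (trace of B^V vanishes) if and only if t₁₄ = t₂₄ = 0. -/
/-- Theorem, SU(2)×SO(2) case: the foliation generated by
`SU(2)×SO(2)` is minimal (the trace of `B^V` vanishes) iff `t₁₄ = t₂₄ = 0`. -/
theorem stmt_15 {L : Type*} [AddCommGroup L] [Module ℝ L]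
    (br : L →ₗ[ℝ] L →ₗ[ℝ] L) (g : L →ₗ[ℝ] L →ₗ[ℝ] ℝ)
    (A B C T X Y : L)
    (εA εB εC εT εX εY b11 b21 c11 c12 c21 c22 x1 y1 x2 y2 t14 t24 ρ θ1 θ2 θ3 θ4 : ℝ)
    (hεA : εA = 1 ∨ εA = -1) (hεB : εB = 1 ∨ εB = -1) (hεC : εC = 1 ∨ εC = -1)
    (hεT : εT = 1 ∨ εT = -1) (hεX : εX = 1 ∨ εX = -1) (hεY : εY = 1 ∨ εY = -1)
    (hLI : LinearIndependent ℝ ![A, B, C, T, X, Y])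
    (hgsymm : ∀ u v : L, g u v = g v u)
    (hgAA : g A A = εA) (hgBB : g B B = εB) (hgCC : g C C = εC)
    (hgTT : g T T = εT) (hgXX : g X X = εX) (hgYY : g Y Y = εY)
    (hgAB : g A B = 0) (hgAC : g A C = 0) (hgAT : g A T = 0)
    (hgAX : g A X = 0) (hgAY : g A Y = 0)
    (hgBC : g B C = 0) (hgBT : g B T = 0) (hgBX : g B X = 0) (hgBY : g B Y = 0)
    (hgCT : g C T = 0) (hgCX : g C X = 0) (hgCY : g C Y = 0)
    (hgTX : g T X = 0) (hgTY : g T Y = 0) (hgXY : g X Y = 0)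
    (hskew : ∀ u v : L, br u v = - br v u)
    (hAB : br A B = (2:ℝ) • C) (hCA : br C A = (2:ℝ) • B) (hBC : br B C = (2:ℝ) • A)
    (hAT : br A T = 0) (hBT : br B T = 0) (hCT : br C T = 0)
    (hAX : br A X = -(b11 • B) - c11 • C) (hAY : br A Y = -(b21 • B) - c21 • C)
    (hBX : br B X = b11 • A - c12 • C) (hBY : br B Y = b21 • A - c22 • C)
    (hCX : br C X = c11 • A + c12 • B) (hCY : br C Y = c21 • A + c22 • B)
    (hTX : br T X = x1 • X + y1 • Y -
      ((1:ℝ)/2) • (((x1 * c12 + y1 * c22) • A - (x1 * c11 + y1 * c21) • B +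
        (x1 * b11 + y1 * b21) • C)) + t14 • T)
    (hTY : br T Y = x2 • X + y2 • Y -
      ((1:ℝ)/2) • (((x2 * c12 + y2 * c22) • A - (x2 * c11 + y2 * c21) • B +
        (x2 * b11 + y2 * b21) • C)) + t24 • T)
    (hXY : br X Y = ρ • X + θ1 • A + θ2 • B + θ3 • C + θ4 • T)
    (hx1y2 : x1 = y2) (hconf : εX * x2 + εY * y1 = 0)
    (BV : L → L → L)
    (hBV : ∀ E F : L, BV E F =
      ((1:ℝ)/2) • ((εX * (g (br X E) F + g (br X F) E)) • X +
                   (εY * (g (br Y E) F + g (br Y F) E)) • Y)) :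
    (εA • BV A A + εB • BV B B + εC • BV C C + εT • BV T T = 0) ↔
      (t14 = 0 ∧ t24 = 0) := by

  -- reversed metric values
  have hgBA : g B A = 0 := by rw [hgsymm]; exact hgAB
  have hgCA : g C A = 0 := by rw [hgsymm]; exact hgAC
  have hgTA : g T A = 0 := by rw [hgsymm]; exact hgAT
  have hgXA : g X A = 0 := by rw [hgsymm]; exact hgAX
  have hgYA : g Y A = 0 := by rw [hgsymm]; exact hgAY
  have hgCB : g C B = 0 := by rw [hgsymm]; exact hgBC
  have hgTB : g T B = 0 := by rw [hgsymm]; exact hgBT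
  have hgXB : g X B = 0 := by rw [hgsymm]; exact hgBX
  have hgYB : g Y B = 0 := by rw [hgsymm]; exact hgBY
  have hgTC : g T C = 0 := by rw [hgsymm]; exact hgCT
  have hgXC : g X C = 0 := by rw [hgsymm]; exact hgCX
  have hgYC : g Y C = 0 := by rw [hgsymm]; exact hgCY
  have hgXT : g X T = 0 := by rw [hgsymm]; exact hgTX
  have hgYT : g Y T = 0 := by rw [hgsymm]; exact hgTY
  have h1 : g (br X A) A = 0 := by
    rw [hskew, hAX]; simp [hgBA, hgCA]
  have h2 : g (br Y A) A = 0 := by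
    rw [hskew, hAY]; simp [hgBA, hgCA]
  have h3 : g (br X B) B = 0 := by
    rw [hskew, hBX]; simp [hgAB, hgCB]
  have h4 : g (br Y B) B = 0 := by
    rw [hskew, hBY]; simp [hgAB, hgCB]
  have h5 : g (br X C) C = 0 := by
    rw [hskew, hCX]; simp [hgAC, hgBC]
  have h6 : g (br Y C) C = 0 := by
    rw [hskew, hCY]; simp [hgAC, hgBC]
  have h7 : g (br X T) T = -(εT * t14) := by
    rw [hskew, hTX]
    simp [hgXT, hgYT, hgAT, hgBT, hgCT, hgTT]
    ring
  have h8 : g (br Y T) T = -(εT * t24) := by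
    rw [hskew, hTY]
    simp [hgXT, hgYT, hgAT, hgBT, hgCT, hgTT]
    ring
  have key : εA • BV A A + εB • BV B B + εC • BV C C + εT • BV T T
      = (-(εT * εX * (εT * t14))) • X + (-(εT * εY * (εT * t24))) • Y := by
    rw [hBV A A, hBV B B, hBV C C, hBV T T, h1, h2, h3, h4, h5, h6, h7, h8]
    match_scalars <;> ring
  have hT2 : εT * εT = 1 := by rcases hεT with h | h <;> rw [h] <;> norm_num
  have hXne : εX ≠ 0 := by rcases hεX with h | h <;> rw [h] <;> norm_num
  have hYne : εY ≠ 0 := by rcases hεY with h | h <;> rw [h] <;> norm_num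
  constructor
  · intro h0
    rw [key] at h0
    have hli := Fintype.linearIndependent_iff.mp hLI
      ![0, 0, 0, 0, -(εT * εX * (εT * t14)), -(εT * εY * (εT * t24))]
    have hsum : ∑ i, (![0, 0, 0, 0, -(εT * εX * (εT * t14)),
        -(εT * εY * (εT * t24))] : Fin 6 → ℝ) i • ![A, B, C, T, X, Y] i = 0 := by
      rw [Fin.sum_univ_six]
      show (0:ℝ) • A + (0:ℝ) • B + (0:ℝ) • C + (0:ℝ) • T +
        (-(εT * εX * (εT * t14))) • X + (-(εT * εY * (εT * t24))) • Y = 0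
      simpa using h0
    have e5 : -(εT * εX * (εT * t14)) = 0 := hli hsum 4
    have e6 : -(εT * εY * (εT * t24)) = 0 := hli hsum 5
    have f5 : εX * t14 = 0 := by linear_combination -(εX * t14) * hT2 - e5
    have f6 : εY * t24 = 0 := by linear_combination -(εY * t24) * hT2 - e6
    exact ⟨by rcases mul_eq_zero.mp f5 with h | h; exact absurd h hXne; exact h,
           by rcases mul_eq_zero.mp f6 with h | h; exact absurd h hYne; exact h⟩
  · rintro ⟨h14, h24⟩
    subst h14; subst h24
    rw [key]; simp
end

section
/- For the 8-dimensional Lie algebra of the SU(2)×SU(2) case with orthonormal basis {A,B,C,R,S,T,X,Y} (causal characters ε's), the foliation generated by su(2)⊕su(2) is minimal, and it is totally geodesic if and only if all twelve quantities (ε_B−ε_A)b₁₁, (ε_B−ε_A)b₂₁, (ε_C−ε_A)c₁₁, (ε_C−ε_A)c₂₁, (ε_C−ε_B)c₁₂, (ε_C−ε_B)c₂₂, (ε_S−ε_R)s₁₄, (ε_S−ε_R)s₂₄, (ε_T−ε_R)t₁₄, (ε_T−ε_R)t₂₄, (ε_T−ε_S)t₁₅, (ε_T−ε_S)t₂₅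 vanish. In particular, in the Riemannian case (all ε = +1) the foliation is always totally geodesic. -/
set_option maxHeartbeats 4000000 in
/-- Theorem, SU(2)×SU(2) case: the foliation generated by
`su(2) ⊕ su(2)` is minimal, and it is totally geodesic iff the twelve stated
quantities vanish; in particular in the Riemannian case (all `ε = 1`) it is
always totally geodesic. -/
theorem stmt_18 {L : Type*} [AddCommGroup L] [Module ℝ L]
    (br : L →ₗ[ℝ] L →ₗ[ℝ] L) (g : L →ₗ[ℝ] L →ₗ[ℝ] ℝ)
    (A B C R S T X Y : L)
    (εA εB εC εR εS εT εX εY : ℝ)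
    (b11 b21 c11 c12 c21 c22 s14 s24 t14 t15 t24 t25 ρ θ1 θ2 θ3 θ4 θ5 θ6 : ℝ)
    (hεA : εA = 1 ∨ εA = -1) (hεB : εB = 1 ∨ εB = -1) (hεC : εC = 1 ∨ εC = -1)
    (hεR : εR = 1 ∨ εR = -1) (hεS : εS = 1 ∨ εS = -1) (hεT : εT = 1 ∨ εT = -1)
    (hεX : εX = 1 ∨ εX = -1) (hεY : εY = 1 ∨ εY = -1)
    (hLI : LinearIndependent ℝ ![A, B, C, R, S, T, X, Y])
    (hgsymm : ∀ u v : L, g u v = g v u)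
    (horth : ∀ i j : Fin 8, i ≠ j →
      g (![A, B, C, R, S, T, X, Y] i) (![A, B, C, R, S, T, X, Y] j) = 0)
    (hgAA : g A A = εA) (hgBB : g B B = εB) (hgCC : g C C = εC)
    (hgRR : g R R = εR) (hgSS : g S S = εS) (hgTT : g T T = εT)
    (hgXX : g X X = εX) (hgYY : g Y Y = εY)
    (hskew : ∀ u v : L, br u v = - br v u)
    (hAB : br A B = (2:ℝ) • C) (hCA : br C A = (2:ℝ) • B) (hBC : br B C = (2:ℝ) • A)
    (hRS : br R S = (2:ℝ) • T) (hTR : br T R = (2:ℝ) • S) (hST : br S T = (2:ℝ) • R)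
    (hcomm : ∀ u ∈ ({A, B, C} : Set L), ∀ v ∈ ({R, S, T} : Set L), br u v = 0)
    (hAX : br A X = -(b11 • B) - c11 • C) (hAY : br A Y = -(b21 • B) - c21 • C)
    (hBX : br B X = b11 • A - c12 • C) (hBY : br B Y = b21 • A - c22 • C)
    (hCX : br C X = c11 • A + c12 • B) (hCY : br C Y = c21 • A + c22 • B)
    (hRX : br R X = -(s14 • S) - t14 • T) (hRY : br R Y = -(s24 • S) - t24 • T)
    (hSX : br S X = s14 • R - t15 • T) (hSY : br S Y = s24 • R - t25 • T)
    (hTX : br T X = t14 • R + t15 • S) (hTY : br T Y = t24 • R + t25 • S)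
    (hXY : br X Y = ρ • X + θ1 • A + θ2 • B + θ3 • C + θ4 • R + θ5 • S + θ6 • T)
    (BV : L → L → L)
    (hBV : ∀ E F : L, BV E F =
      ((1:ℝ)/2) • ((εX * (g (br X E) F + g (br X F) E)) • X +
                   (εY * (g (br Y E) F + g (br Y F) E)) • Y)) :
    (εA • BV A A + εB • BV B B + εC • BV C C +
       εR • BV R R + εS • BV S S + εT • BV T T = 0) ∧
    ((∀ E ∈ Submodule.span ℝ ({A, B, C, R, S, T} : Set L),
      ∀ F ∈ Submodule.span ℝ ({A, B, C, R, S, T} : Set L), BV E F = 0) ↔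
      ((εB - εA) * b11 = 0 ∧ (εB - εA) * b21 = 0 ∧ (εC - εA) * c11 = 0 ∧
       (εC - εA) * c21 = 0 ∧ (εC - εB) * c12 = 0 ∧ (εC - εB) * c22 = 0 ∧
       (εS - εR) * s14 = 0 ∧ (εS - εR) * s24 = 0 ∧ (εT - εR) * t14 = 0 ∧
       (εT - εR) * t24 = 0 ∧ (εT - εS) * t15 = 0 ∧ (εT - εS) * t25 = 0)) ∧
    ((εA = 1 ∧ εB = 1 ∧ εC = 1 ∧ εR = 1 ∧ εS = 1 ∧ εT = 1 ∧ εX = 1 ∧ εY = 1) →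
      ∀ E ∈ Submodule.span ℝ ({A, B, C, R, S, T} : Set L),
      ∀ F ∈ Submodule.span ℝ ({A, B, C, R, S, T} : Set L), BV E F = 0) := by
  
  have gAB : g A B = 0 := by simpa using horth 0 1 (by decide)
  have gAC : g A C = 0 := by simpa using horth 0 2 (by decide)
  have gAR : g A R = 0 := by simpa using horth 0 3 (by decide)
  have gAS : g A S = 0 := by simpa using horth 0 4 (by decide)
  have gAT : g A T = 0 := by simpa using horth 0 5 (by decide)
  have gBA : g B A = 0 := by simpa using horth 1 0 (by decide)
  have gBC : g B C = 0 := by simpa using horth 1 2 (by decide)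
  have gBR : g B R = 0 := by simpa using horth 1 3 (by decide)
  have gBS : g B S = 0 := by simpa using horth 1 4 (by decide)
  have gBT : g B T = 0 := by simpa using horth 1 5 (by decide)
  have gCA : g C A = 0 := by simpa using horth 2 0 (by decide)
  have gCB : g C B = 0 := by simpa using horth 2 1 (by decide)
  have gCR : g C R = 0 := by simpa using horth 2 3 (by decide)
  have gCS : g C S = 0 := by simpa using horth 2 4 (by decide)
  have gCT : g C T = 0 := by simpa using horth 2 5 (by decide)
  have gRA : g R A = 0 := by simpa using horth 3 0 (by decide)
  have gRB : g R B = 0 := by simpa using horth 3 1 (by decide)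
  have gRC : g R C = 0 := by simpa using horth 3 2 (by decide)
  have gRS : g R S = 0 := by simpa using horth 3 4 (by decide)
  have gRT : g R T = 0 := by simpa using horth 3 5 (by decide)
  have gSA : g S A = 0 := by simpa using horth 4 0 (by decide)
  have gSB : g S B = 0 := by simpa using horth 4 1 (by decide)
  have gSC : g S C = 0 := by simpa using horth 4 2 (by decide)
  have gSR : g S R = 0 := by simpa using horth 4 3 (by decide)
  have gST : g S T = 0 := by simpa using horth 4 5 (by decide)
  have gTA : g T A = 0 := by simpa using horth 5 0 (by decide)
  have gTB : g T B = 0 := by simpa using horth 5 1 (by decide)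
  have gTC : g T C = 0 := by simpa using horth 5 2 (by decide)
  have gTR : g T R = 0 := by simpa using horth 5 3 (by decide)
  have gTS : g T S = 0 := by simpa using horth 5 4 (by decide)
  have brXA : br X A = b11 • B + c11 • C := by rw [hskew X A, hAX]; module
  have brXB : br X B = (-b11) • A + c12 • C := by rw [hskew X B, hBX]; module
  have brXC : br X C = (-c11) • A + (-c12) • B := by rw [hskew X C, hCX]; module
  have brXR : br X R = s14 • S + t14 • T := by rw [hskew X R, hRX]; module
  have brXS : br X S = (-s14) • R + t15 • T := by rw [hskew X S, hSX]; module
  have brXT : br X T = (-t14) • R + (-t15) • S := by rw [hskew X T, hTX]; module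
  have brYA : br Y A = b21 • B + c21 • C := by rw [hskew Y A, hAY]; module
  have brYB : br Y B = (-b21) • A + c22 • C := by rw [hskew Y B, hBY]; module
  have brYC : br Y C = (-c21) • A + (-c22) • B := by rw [hskew Y C, hCY]; module
  have brYR : br Y R = s24 • S + t24 • T := by rw [hskew Y R, hRY]; module
  have brYS : br Y S = (-s24) • R + t25 • T := by rw [hskew Y S, hSY]; module
  have brYT : br Y T = (-t24) • R + (-t25) • S := by rw [hskew Y T, hTY]; module
  have hx0 : εX ≠ 0 := by rcases hεX with h | h <;> rw [h] <;> norm_num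
  have hy0 : εY ≠ 0 := by rcases hεY with h | h <;> rw [h] <;> norm_num
  have hXYli : LinearIndependent ℝ ![X, Y] := by
    have h := hLI.comp ![(6 : Fin 8), 7] (by decide)
    have heq : (![A, B, C, R, S, T, X, Y] ∘ ![(6 : Fin 8), 7]) = ![X, Y] := by
      funext i; fin_cases i <;> rfl
    rwa [heq] at h
  have extract : ∀ c d : ℝ, c • X + d • Y = 0 → c = 0 ∧ d = 0 := by
    intro c d h
    have h2 := Fintype.linearIndependent_iff.mp hXYli ![c, d]
      (by simpa [Fin.sum_univ_two] using h)
    exact ⟨h2 0, h2 1⟩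
  have solveX : ∀ u : ℝ, εX * (u / 2) = 0 → u = 0 := by
    intro u hu
    rcases mul_eq_zero.mp hu with h | h
    · exact absurd h hx0
    · linarith
  have solveY : ∀ u : ℝ, εY * (u / 2) = 0 → u = 0 := by
    intro u hu
    rcases mul_eq_zero.mp hu with h | h
    · exact absurd h hy0
    · linarith
  have dA : BV A A = 0 := by
    rw [hBV, brXA, brYA]
    simp only [map_add, map_smul, LinearMap.add_apply, LinearMap.smul_apply, smul_eq_mul, hgAA, hgBB, hgCC, hgRR, hgSS, hgTT, gAB, gAC, gAR, gAS, gAT, gBA, gBC, gBR, gBS, gBT, gCA, gCB, gCR, gCS, gCT, gRA, gRB, gRC, gRS, gRT, gSA, gSB, gSC, gSR, gST, gTA, gTB, gTC, gTR, gTS]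
    match_scalars <;> ring
  have dB : BV B B = 0 := by
    rw [hBV, brXB, brYB]
    simp only [map_add, map_smul, LinearMap.add_apply, LinearMap.smul_apply, smul_eq_mul, hgAA, hgBB, hgCC, hgRR, hgSS, hgTT, gAB, gAC, gAR, gAS, gAT, gBA, gBC, gBR, gBS, gBT, gCA, gCB, gCR, gCS, gCT, gRA, gRB, gRC, gRS, gRT, gSA, gSB, gSC, gSR, gST, gTA, gTB, gTC, gTR, gTS]
    match_scalars <;> ring
  have dC : BV C C = 0 := by
    rw [hBV, brXC, brYC]
    simp only [map_add, map_smul, LinearMap.add_apply, LinearMap.smul_apply, smul_eq_mul, hgAA, hgBB, hgCC, hgRR, hgSS, hgTT, gAB, gAC, gAR, gAS, gAT, gBA, gBC, gBR, gBS, gBT, gCA, gCB, gCR, gCS, gCT, gRA, gRB, gRC, gRS, gRT, gSA, gSB, gSC, gSR, gST, gTA, gTB, gTC, gTR, gTS]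
    match_scalars <;> ring
  have dR : BV R R = 0 := by
    rw [hBV, brXR, brYR]
    simp only [map_add, map_smul, LinearMap.add_apply, LinearMap.smul_apply, smul_eq_mul, hgAA, hgBB, hgCC, hgRR, hgSS, hgTT, gAB, gAC, gAR, gAS, gAT, gBA, gBC, gBR, gBS, gBT, gCA, gCB, gCR, gCS, gCT, gRA, gRB, gRC, gRS, gRT, gSA, gSB, gSC, gSR, gST, gTA, gTB, gTC, gTR, gTS]
    match_scalars <;> ring
  have dS : BV S S = 0 := by
    rw [hBV, brXS, brYS]
    simp only [map_add, map_smul, LinearMap.add_apply, LinearMap.smul_apply, smul_eq_mul, hgAA, hgBB, hgCC, hgRR, hgSS, hgTT, gAB, gAC, gAR, gAS, gAT, gBA, gBC, gBR, gBS, gBT, gCA, gCB, gCR, gCS, gCT, gRA, gRB, gRC, gRS, gRT, gSA, gSB, gSC, gSR, gST, gTA, gTB, gTC, gTR, gTS]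
    match_scalars <;> ring
  have dT : BV T T = 0 := by
    rw [hBV, brXT, brYT]
    simp only [map_add, map_smul, LinearMap.add_apply, LinearMap.smul_apply, smul_eq_mul, hgAA, hgBB, hgCC, hgRR, hgSS, hgTT, gAB, gAC, gAR, gAS, gAT, gBA, gBC, gBR, gBS, gBT, gCA, gCB, gCR, gCS, gCT, gRA, gRB, gRC, gRS, gRT, gSA, gSB, gSC, gSR, gST, gTA, gTB, gTC, gTR, gTS]
    match_scalars <;> ring
  have hmin : εA • BV A A + εB • BV B B + εC • BV C C +
      εR • BV R R + εS • BV S S + εT • BV T T = 0 := by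
    rw [dA, dB, dC, dR, dS, dT]; simp
  have BVsymm : ∀ E F : L, BV E F = BV F E := by
    intro E F; rw [hBV, hBV]; match_scalars <;> ring
  have BV0 : ∀ F : L, BV (0 : L) F = 0 := by
    intro F; rw [hBV]; simp
  have BVadd : ∀ E E' F : L, BV (E + E') F = BV E F + BV E' F := by
    intro E E' F; rw [hBV, hBV, hBV]
    simp only [map_add, LinearMap.add_apply]
    match_scalars <;> ring
  have BVsmul : ∀ (a : ℝ) (E F : L), BV (a • E) F = a • BV E F := by
    intro a E F; rw [hBV, hBV]
    simp only [map_smul, LinearMap.smul_apply, smul_eq_mul]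
    match_scalars <;> ring
  have memA : A ∈ Submodule.span ℝ ({A, B, C, R, S, T} : Set L) :=
    Submodule.subset_span (by simp)
  have memB : B ∈ Submodule.span ℝ ({A, B, C, R, S, T} : Set L) :=
    Submodule.subset_span (by simp)
  have memC : C ∈ Submodule.span ℝ ({A, B, C, R, S, T} : Set L) :=
    Submodule.subset_span (by simp)
  have memR : R ∈ Submodule.span ℝ ({A, B, C, R, S, T} : Set L) :=
    Submodule.subset_span (by simp)
  have memS : S ∈ Submodule.span ℝ ({A, B, C, R, S, T} : Set L) :=
    Submodule.subset_span (by simp)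
  have memT : T ∈ Submodule.span ℝ ({A, B, C, R, S, T} : Set L) :=
    Submodule.subset_span (by simp)
  have htg_mpr : ((εB - εA) * b11 = 0 ∧ (εB - εA) * b21 = 0 ∧ (εC - εA) * c11 = 0 ∧
       (εC - εA) * c21 = 0 ∧ (εC - εB) * c12 = 0 ∧ (εC - εB) * c22 = 0 ∧
       (εS - εR) * s14 = 0 ∧ (εS - εR) * s24 = 0 ∧ (εT - εR) * t14 = 0 ∧
       (εT - εR) * t24 = 0 ∧ (εT - εS) * t15 = 0 ∧ (εT - εS) * t25 = 0) →
      ∀ E ∈ Submodule.span ℝ ({A, B, C, R, S, T} : Set L),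
      ∀ F ∈ Submodule.span ℝ ({A, B, C, R, S, T} : Set L), BV E F = 0 := by
    rintro ⟨h1, h2, h3, h4, h5, h6, h7, h8, h9, h10, h11, h12⟩
    have kAB : BV A B = 0 := by
      rw [hBV, brXA, brXB, brYA, brYB]
      simp only [map_add, map_smul, LinearMap.add_apply, LinearMap.smul_apply, smul_eq_mul, hgAA, hgBB, hgCC, hgRR, hgSS, hgTT, gAB, gAC, gAR, gAS, gAT, gBA, gBC, gBR, gBS, gBT, gCA, gCB, gCR, gCS, gCT, gRA, gRB, gRC, gRS, gRT, gSA, gSB, gSC, gSR, gST, gTA, gTB, gTC, gTR, gTS]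
      match_scalars
      · linear_combination (εX / 2) * h1
      · linear_combination (εY / 2) * h2
    have kAC : BV A C = 0 := by
      rw [hBV, brXA, brXC, brYA, brYC]
      simp only [map_add, map_smul, LinearMap.add_apply, LinearMap.smul_apply, smul_eq_mul, hgAA, hgBB, hgCC, hgRR, hgSS, hgTT, gAB, gAC, gAR, gAS, gAT, gBA, gBC, gBR, gBS, gBT, gCA, gCB, gCR, gCS, gCT, gRA, gRB, gRC, gRS, gRT, gSA, gSB, gSC, gSR, gST, gTA, gTB, gTC, gTR, gTS]
      match_scalars
      · linear_combination (εX / 2) * h3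
      · linear_combination (εY / 2) * h4
    have kBC : BV B C = 0 := by
      rw [hBV, brXB, brXC, brYB, brYC]
      simp only [map_add, map_smul, LinearMap.add_apply, LinearMap.smul_apply, smul_eq_mul, hgAA, hgBB, hgCC, hgRR, hgSS, hgTT, gAB, gAC, gAR, gAS, gAT, gBA, gBC, gBR, gBS, gBT, gCA, gCB, gCR, gCS, gCT, gRA, gRB, gRC, gRS, gRT, gSA, gSB, gSC, gSR, gST, gTA, gTB, gTC, gTR, gTS]
      match_scalars
      · linear_combination (εX / 2) * h5
      · linear_combination (εY / 2) * h6
    have kRS : BV R S = 0 := by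
      rw [hBV, brXR, brXS, brYR, brYS]
      simp only [map_add, map_smul, LinearMap.add_apply, LinearMap.smul_apply, smul_eq_mul, hgAA, hgBB, hgCC, hgRR, hgSS, hgTT, gAB, gAC, gAR, gAS, gAT, gBA, gBC, gBR, gBS, gBT, gCA, gCB, gCR, gCS, gCT, gRA, gRB, gRC, gRS, gRT, gSA, gSB, gSC, gSR, gST, gTA, gTB, gTC, gTR, gTS]
      match_scalars
      · linear_combination (εX / 2) * h7
      · linear_combination (εY / 2) * h8
    have kRT : BV R T = 0 := by
      rw [hBV, brXR, brXT, brYR, brYT]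
      simp only [map_add, map_smul, LinearMap.add_apply, LinearMap.smul_apply, smul_eq_mul, hgAA, hgBB, hgCC, hgRR, hgSS, hgTT, gAB, gAC, gAR, gAS, gAT, gBA, gBC, gBR, gBS, gBT, gCA, gCB, gCR, gCS, gCT, gRA, gRB, gRC, gRS, gRT, gSA, gSB, gSC, gSR, gST, gTA, gTB, gTC, gTR, gTS]
      match_scalars
      · linear_combination (εX / 2) * h9
      · linear_combination (εY / 2) * h10
    have kST : BV S T = 0 := by
      rw [hBV, brXS, brXT, brYS, brYT]
      simp only [map_add, map_smul, LinearMap.add_apply, LinearMap.smul_apply, smul_eq_mul, hgAA, hgBB, hgCC, hgRR, hgSS, hgTT, gAB, gAC, gAR, gAS, gAT, gBA, gBC, gBR, gBS, gBT, gCA, gCB, gCR, gCS, gCT, gRA, gRB, gRC, gRS, gRT, gSA, gSB, gSC, gSR, gST, gTA, gTB, gTC, gTR, gTS]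
      match_scalars
      · linear_combination (εX / 2) * h11
      · linear_combination (εY / 2) * h12
    have kAR : BV A R = 0 := by
      rw [hBV, brXA, brXR, brYA, brYR]
      simp only [map_add, map_smul, LinearMap.add_apply, LinearMap.smul_apply, smul_eq_mul, hgAA, hgBB, hgCC, hgRR, hgSS, hgTT, gAB, gAC, gAR, gAS, gAT, gBA, gBC, gBR, gBS, gBT, gCA, gCB, gCR, gCS, gCT, gRA, gRB, gRC, gRS, gRT, gSA, gSB, gSC, gSR, gST, gTA, gTB, gTC, gTR, gTS]
      match_scalars <;> ring
    have kAS : BV A S = 0 := by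
      rw [hBV, brXA, brXS, brYA, brYS]
      simp only [map_add, map_smul, LinearMap.add_apply, LinearMap.smul_apply, smul_eq_mul, hgAA, hgBB, hgCC, hgRR, hgSS, hgTT, gAB, gAC, gAR, gAS, gAT, gBA, gBC, gBR, gBS, gBT, gCA, gCB, gCR, gCS, gCT, gRA, gRB, gRC, gRS, gRT, gSA, gSB, gSC, gSR, gST, gTA, gTB, gTC, gTR, gTS]
      match_scalars <;> ring
    have kAT : BV A T = 0 := by
      rw [hBV, brXA, brXT, brYA, brYT]
      simp only [map_add, map_smul, LinearMap.add_apply, LinearMap.smul_apply, smul_eq_mul, hgAA, hgBB, hgCC, hgRR, hgSS, hgTT, gAB, gAC, gAR, gAS, gAT, gBA, gBC, gBR, gBS, gBT, gCA, gCB, gCR, gCS, gCT, gRA, gRB, gRC, gRS, gRT, gSA, gSB, gSC, gSR, gST, gTA, gTB, gTC, gTR, gTS]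
      match_scalars <;> ring
    have kBR : BV B R = 0 := by
      rw [hBV, brXB, brXR, brYB, brYR]
      simp only [map_add, map_smul, LinearMap.add_apply, LinearMap.smul_apply, smul_eq_mul, hgAA, hgBB, hgCC, hgRR, hgSS, hgTT, gAB, gAC, gAR, gAS, gAT, gBA, gBC, gBR, gBS, gBT, gCA, gCB, gCR, gCS, gCT, gRA, gRB, gRC, gRS, gRT, gSA, gSB, gSC, gSR, gST, gTA, gTB, gTC, gTR, gTS]
      match_scalars <;> ring
    have kBS : BV B S = 0 := by
      rw [hBV, brXB, brXS, brYB, brYS]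
      simp only [map_add, map_smul, LinearMap.add_apply, LinearMap.smul_apply, smul_eq_mul, hgAA, hgBB, hgCC, hgRR, hgSS, hgTT, gAB, gAC, gAR, gAS, gAT, gBA, gBC, gBR, gBS, gBT, gCA, gCB, gCR, gCS, gCT, gRA, gRB, gRC, gRS, gRT, gSA, gSB, gSC, gSR, gST, gTA, gTB, gTC, gTR, gTS]
      match_scalars <;> ring
    have kBT : BV B T = 0 := by
      rw [hBV, brXB, brXT, brYB, brYT]
      simp only [map_add, map_smul, LinearMap.add_apply, LinearMap.smul_apply, smul_eq_mul, hgAA, hgBB, hgCC, hgRR, hgSS, hgTT, gAB, gAC, gAR, gAS, gAT, gBA, gBC, gBR, gBS, gBT, gCA, gCB, gCR, gCS, gCT, gRA, gRB, gRC, gRS, gRT, gSA, gSB, gSC, gSR, gST, gTA, gTB, gTC, gTR, gTS]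
      match_scalars <;> ring
    have kCR : BV C R = 0 := by
      rw [hBV, brXC, brXR, brYC, brYR]
      simp only [map_add, map_smul, LinearMap.add_apply, LinearMap.smul_apply, smul_eq_mul, hgAA, hgBB, hgCC, hgRR, hgSS, hgTT, gAB, gAC, gAR, gAS, gAT, gBA, gBC, gBR, gBS, gBT, gCA, gCB, gCR, gCS, gCT, gRA, gRB, gRC, gRS, gRT, gSA, gSB, gSC, gSR, gST, gTA, gTB, gTC, gTR, gTS]
      match_scalars <;> ring
    have kCS : BV C S = 0 := by
      rw [hBV, brXC, brXS, brYC, brYS]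
      simp only [map_add, map_smul, LinearMap.add_apply, LinearMap.smul_apply, smul_eq_mul, hgAA, hgBB, hgCC, hgRR, hgSS, hgTT, gAB, gAC, gAR, gAS, gAT, gBA, gBC, gBR, gBS, gBT, gCA, gCB, gCR, gCS, gCT, gRA, gRB, gRC, gRS, gRT, gSA, gSB, gSC, gSR, gST, gTA, gTB, gTC, gTR, gTS]
      match_scalars <;> ring
    have kCT : BV C T = 0 := by
      rw [hBV, brXC, brXT, brYC, brYT]
      simp only [map_add, map_smul, LinearMap.add_apply, LinearMap.smul_apply, smul_eq_mul, hgAA, hgBB, hgCC, hgRR, hgSS, hgTT, gAB, gAC, gAR, gAS, gAT, gBA, gBC, gBR, gBS, gBT, gCA, gCB, gCR, gCS, gCT, gRA, gRB, gRC, gRS, gRT, gSA, gSB, gSC, gSR, gST, gTA, gTB, gTC, gTR, gTS]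
      match_scalars <;> ring
    have key : ∀ u ∈ ({A, B, C, R, S, T} : Set L),
        ∀ v ∈ ({A, B, C, R, S, T} : Set L), BV u v = 0 := by
      intro u hu v hv
      simp only [Set.mem_insert_iff, Set.mem_singleton_iff] at hu hv
      rcases hu with rfl | rfl | rfl | rfl | rfl | rfl <;>
        rcases hv with rfl | rfl | rfl | rfl | rfl | rfl <;>
        first
          | exact dA
          | exact dB
          | exact dC
          | exact dR
          | exact dS
          | exact dT
          | exact kAB
          | exact (BVsymm _ _).trans kAB
          | exact kAC
          | exact (BVsymm _ _).trans kAC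
          | exact kBC
          | exact (BVsymm _ _).trans kBC
          | exact kRS
          | exact (BVsymm _ _).trans kRS
          | exact kRT
          | exact (BVsymm _ _).trans kRT
          | exact kST
          | exact (BVsymm _ _).trans kST
          | exact kAR
          | exact (BVsymm _ _).trans kAR
          | exact kAS
          | exact (BVsymm _ _).trans kAS
          | exact kAT
          | exact (BVsymm _ _).trans kAT
          | exact kBR
          | exact (BVsymm _ _).trans kBR
          | exact kBS
          | exact (BVsymm _ _).trans kBS
          | exact kBT
          | exact (BVsymm _ _).trans kBT
          | exact kCR
          | exact (BVsymm _ _).trans kCR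
          | exact kCS
          | exact (BVsymm _ _).trans kCS
          | exact kCT
          | exact (BVsymm _ _).trans kCT
    intro E hE
    induction hE using Submodule.span_induction with
    | mem u hu =>
        intro F hF
        induction hF using Submodule.span_induction with
        | mem v hv => exact key u hu v hv
        | zero => rw [BVsymm]; exact BV0 u
        | add x y hx hy ihx ihy =>
            rw [BVsymm u (x + y), BVadd, BVsymm x u, BVsymm y u, ihx, ihy, add_zero]
        | smul a x hx ihx =>
            rw [BVsymm u (a • x), BVsmul, BVsymm x u, ihx, smul_zero]
    | zero => intro F hF; exact BV0 F
    | add x y hx hy ihx ihy =>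
        intro F hF; rw [BVadd, ihx F hF, ihy F hF, add_zero]
    | smul a x hx ihx =>
        intro F hF; rw [BVsmul, ihx F hF, smul_zero]
  have htg_mp : (∀ E ∈ Submodule.span ℝ ({A, B, C, R, S, T} : Set L),
      ∀ F ∈ Submodule.span ℝ ({A, B, C, R, S, T} : Set L), BV E F = 0) →
      ((εB - εA) * b11 = 0 ∧ (εB - εA) * b21 = 0 ∧ (εC - εA) * c11 = 0 ∧
       (εC - εA) * c21 = 0 ∧ (εC - εB) * c12 = 0 ∧ (εC - εB) * c22 = 0 ∧
       (εS - εR) * s14 = 0 ∧ (εS - εR) * s24 = 0 ∧ (εT - εR) * t14 = 0 ∧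
       (εT - εR) * t24 = 0 ∧ (εT - εS) * t15 = 0 ∧ (εT - εS) * t25 = 0) := by
    intro H
    have eAB : (εX * ((εB - εA) * b11 / 2)) • X + (εY * ((εB - εA) * b21 / 2)) • Y = 0 := by
      rw [← H A memA B memB, hBV, brXA, brXB, brYA, brYB]
      simp only [map_add, map_smul, LinearMap.add_apply, LinearMap.smul_apply, smul_eq_mul, hgAA, hgBB, hgCC, hgRR, hgSS, hgTT, gAB, gAC, gAR, gAS, gAT, gBA, gBC, gBR, gBS, gBT, gCA, gCB, gCR, gCS, gCT, gRA, gRB, gRC, gRS, gRT, gSA, gSB, gSC, gSR, gST, gTA, gTB, gTC, gTR, gTS]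
      match_scalars <;> ring
    obtain ⟨eAB1, eAB2⟩ := extract _ _ eAB
    have eAC : (εX * ((εC - εA) * c11 / 2)) • X + (εY * ((εC - εA) * c21 / 2)) • Y = 0 := by
      rw [← H A memA C memC, hBV, brXA, brXC, brYA, brYC]
      simp only [map_add, map_smul, LinearMap.add_apply, LinearMap.smul_apply, smul_eq_mul, hgAA, hgBB, hgCC, hgRR, hgSS, hgTT, gAB, gAC, gAR, gAS, gAT, gBA, gBC, gBR, gBS, gBT, gCA, gCB, gCR, gCS, gCT, gRA, gRB, gRC, gRS, gRT, gSA, gSB, gSC, gSR, gST, gTA, gTB, gTC, gTR, gTS]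
      match_scalars <;> ring
    obtain ⟨eAC1, eAC2⟩ := extract _ _ eAC
    have eBC : (εX * ((εC - εB) * c12 / 2)) • X + (εY * ((εC - εB) * c22 / 2)) • Y = 0 := by
      rw [← H B memB C memC, hBV, brXB, brXC, brYB, brYC]
      simp only [map_add, map_smul, LinearMap.add_apply, LinearMap.smul_apply, smul_eq_mul, hgAA, hgBB, hgCC, hgRR, hgSS, hgTT, gAB, gAC, gAR, gAS, gAT, gBA, gBC, gBR, gBS, gBT, gCA, gCB, gCR, gCS, gCT, gRA, gRB, gRC, gRS, gRT, gSA, gSB, gSC, gSR, gST, gTA, gTB, gTC, gTR, gTS]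
      match_scalars <;> ring
    obtain ⟨eBC1, eBC2⟩ := extract _ _ eBC
    have eRS : (εX * ((εS - εR) * s14 / 2)) • X + (εY * ((εS - εR) * s24 / 2)) • Y = 0 := by
      rw [← H R memR S memS, hBV, brXR, brXS, brYR, brYS]
      simp only [map_add, map_smul, LinearMap.add_apply, LinearMap.smul_apply, smul_eq_mul, hgAA, hgBB, hgCC, hgRR, hgSS, hgTT, gAB, gAC, gAR, gAS, gAT, gBA, gBC, gBR, gBS, gBT, gCA, gCB, gCR, gCS, gCT, gRA, gRB, gRC, gRS, gRT, gSA, gSB, gSC, gSR, gST, gTA, gTB, gTC, gTR, gTS]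
      match_scalars <;> ring
    obtain ⟨eRS1, eRS2⟩ := extract _ _ eRS
    have eRT : (εX * ((εT - εR) * t14 / 2)) • X + (εY * ((εT - εR) * t24 / 2)) • Y = 0 := by
      rw [← H R memR T memT, hBV, brXR, brXT, brYR, brYT]
      simp only [map_add, map_smul, LinearMap.add_apply, LinearMap.smul_apply, smul_eq_mul, hgAA, hgBB, hgCC, hgRR, hgSS, hgTT, gAB, gAC, gAR, gAS, gAT, gBA, gBC, gBR, gBS, gBT, gCA, gCB, gCR, gCS, gCT, gRA, gRB, gRC, gRS, gRT, gSA, gSB, gSC, gSR, gST, gTA, gTB, gTC, gTR, gTS]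
      match_scalars <;> ring
    obtain ⟨eRT1, eRT2⟩ := extract _ _ eRT
    have eST : (εX * ((εT - εS) * t15 / 2)) • X + (εY * ((εT - εS) * t25 / 2)) • Y = 0 := by
      rw [← H S memS T memT, hBV, brXS, brXT, brYS, brYT]
      simp only [map_add, map_smul, LinearMap.add_apply, LinearMap.smul_apply, smul_eq_mul, hgAA, hgBB, hgCC, hgRR, hgSS, hgTT, gAB, gAC, gAR, gAS, gAT, gBA, gBC, gBR, gBS, gBT, gCA, gCB, gCR, gCS, gCT, gRA, gRB, gRC, gRS, gRT, gSA, gSB, gSC, gSR, gST, gTA, gTB, gTC, gTR, gTS]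
      match_scalars <;> ring
    obtain ⟨eST1, eST2⟩ := extract _ _ eST
    exact ⟨solveX _ eAB1, solveY _ eAB2, solveX _ eAC1, solveY _ eAC2, solveX _ eBC1, solveY _ eBC2, solveX _ eRS1, solveY _ eRS2, solveX _ eRT1, solveY _ eRT2, solveX _ eST1, solveY _ eST2⟩
  refine ⟨hmin, ⟨htg_mp, htg_mpr⟩, ?_⟩
  rintro ⟨hA1, hB1, hC1, hR1, hS1, hT1, -, -⟩
  exact htg_mpr (by rw [hA1, hB1, hC1, hR1, hS1, hT1]; norm_num)
end
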